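/- arXiv:2203.12740 — 13 statements merged into one kernel-verified Lean document; each statement's English description precedes it below -/
import Mathlib

section
/- Suppose Assumption TI holds and μ₀₀ and μ₁₀ are strictly increasing on ℝ. Then for every (g,r) ∈ {0,1}² with P(G=g, R=r) > 0 and every y in the range of μ₁₀, the conditional CDF of the follow-up untreated potential outcome satisfies F_{Y₁(0)|G=g,R=r}(y) = F_{Y₀(0)|G=g,R=r}(T₀(y)), where T₀(y) := μ₀₀(μ₁₀⁻¹(y)) and μ₁₀⁻¹(y) denotes the unique u ∈ ℝ with μ₁₀(u) = y. (Lemma 1, part 1(i).) -/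
open MeasureTheory ProbabilityTheory

/-- Conditional CDF of `X` given the event `A`: `F_{X|A}(y) = P(X ≤ y | A)`. -/
noncomputable def cCDF {Ω : Type*} [MeasurableSpace Ω] (P : Measure Ω) (A : Set Ω)
    (X : Ω → ℝ) (y : ℝ) : ℝ :=
  ((P[|A]) {ω | X ω ≤ y}).toReal

/-- **Lemma 1, part 1(i)**: under time invariance (TI) and strict monotonicity of the
untreated structural functions `μ₀₀, μ₁₀`, for every treatment-response subpopulation
`(g,r)` with positive probability and every `y` in the range of `μ₁₀`, the conditional
CDF of the follow-up untreated potential outcome `Y₁(0) = μ₁₀(U₁)` at `y` equals the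
conditional CDF of the baseline untreated potential outcome `Y₀(0) = μ₀₀(U₀)` at
`T₀(y) = μ₀₀(μ₁₀⁻¹(y))`, where `u = μ₁₀⁻¹(y)` is the unique solution of `μ₁₀(u) = y`. -/
theorem cic_lemma1_part1i {Ω : Type*} [MeasurableSpace Ω]
    (P : Measure Ω) [IsProbabilityMeasure P]
    (U₀ U₁ : Ω → ℝ) (G R : Ω → Bool)
    (hU₀ : Measurable U₀) (hU₁ : Measurable U₁)
    (hG : Measurable G) (hR : Measurable R)
    (μ00 μ10 : ℝ → ℝ)
    -- Assumption TI (time invariance)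
    (hTI : ∀ g r : Bool, 0 < P {ω | G ω = g ∧ R ω = r} →
      (P[|{ω | G ω = g ∧ R ω = r}]).map U₀ = (P[|{ω | G ω = g ∧ R ω = r}]).map U₁)
    -- strict monotonicity of μ₀₀ and μ₁₀
    (hμ00 : StrictMono μ00) (hμ10 : StrictMono μ10)
    (g r : Bool) (hgr : 0 < P {ω | G ω = g ∧ R ω = r})
    (y : ℝ) (hy : y ∈ Set.range μ10)
    (u : ℝ) (hu : μ10 u = y) :
    cCDF P {ω | G ω = g ∧ R ω = r} (fun ω => μ10 (U₁ ω)) y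
      = cCDF P {ω | G ω = g ∧ R ω = r} (fun ω => μ00 (U₀ ω)) (μ00 u) := by
  have hset1 : {ω | μ10 (U₁ ω) ≤ y} = U₁ ⁻¹' Set.Iic u := by
    ext ω
    simp only [Set.mem_setOf_eq, Set.mem_preimage, Set.mem_Iic]
    constructor
    · intro h
      by_contra hc
      push_neg at hc
      exact absurd (hu ▸ hμ10 hc) (not_lt.mpr h)
    · intro h
      calc μ10 (U₁ ω) ≤ μ10 u := hμ10.monotone h
        _ = y := hu
  have hset0 : {ω | μ00 (U₀ ω) ≤ μ00 u} = U₀ ⁻¹' Set.Iic u := by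
    ext ω
    simp [hμ00.le_iff_le]
  have hTI' := hTI g r hgr
  unfold cCDF
  rw [hset1, hset0]
  rw [← Measure.map_apply hU₁ measurableSet_Iic, ← Measure.map_apply hU₀ measurableSet_Iic, hTI']
end

section
/- Suppose Assumptions TI, CONT and M0 hold. Then for every y in the range of μ₁₀, the transformation T₀(y) := μ₀₀(μ₁₀⁻¹(y)) is identified from the control respondents: T₀(y) = F_{Y₀|G=0,R=1}^{-1}(F_{Y₁|G=0,R=1}(y)), where Y₀ and Y₁ are the observed baseline and follow-up outcomes (so that on {G=0, R=1}, Y₀ = μ₀₀(U₀) and Y₁ = μ₁₀(U₁)). (Lemma 1, part 1(ii).) -/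
open MeasureTheory ProbabilityTheory

/-- Generalized inverse `F⁻¹(q) = inf {y ∈ ℝ : F(y) ≥ q}`. -/
noncomputable def ginv (F : ℝ → ℝ) (q : ℝ) : ℝ :=
  sInf {y : ℝ | q ≤ F y}

/-- Conditional expectation of `X` given the event `A`: `E[X·1_A]/P(A)`. -/
noncomputable def cExp {Ω : Type*} [MeasurableSpace Ω] (P : Measure Ω) (A : Set Ω)
    (X : Ω → ℝ) : ℝ :=
  (∫ ω in A, X ω ∂P) / (P A).toReal

/-- Conditional probability of `B` given `A`: `P(B|A) = P(B ∩ A)/P(A)`. -/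
noncomputable def condProb {Ω : Type*} [MeasurableSpace Ω] (P : Measure Ω)
    (A B : Set Ω) : ℝ :=
  (P (B ∩ A)).toReal / (P A).toReal

/-- **Lemma 1, part 1(ii)**: under Assumptions TI, CONT and M0, for every `y` in the range
of `μ₁₀`, the transformation `T₀(y) = μ₀₀(μ₁₀⁻¹(y))` (where `u = μ₁₀⁻¹(y)` is the unique
solution of `μ₁₀(u) = y`) is identified from the control respondents:
`T₀(y) = F_{Y₀|G=0,R=1}⁻¹(F_{Y₁|G=0,R=1}(y))`. -/
theorem cic_lemma1_part1ii {Ω : Type*} [MeasurableSpace Ω]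
    (P : Measure Ω) [IsProbabilityMeasure P]
    (U₀ U₁ : Ω → ℝ) (G R : Ω → Bool)
    (hU₀ : Measurable U₀) (hU₁ : Measurable U₁)
    (hG : Measurable G) (hR : Measurable R)
    (μ00 μ10 μ11 : ℝ → ℝ)
    -- observed outcomes
    (Y0 Y1 : Ω → ℝ)
    (hY0 : ∀ ω, Y0 ω = μ00 (U₀ ω))
    (hY1 : ∀ ω, Y1 ω = if G ω = true then μ11 (U₁ ω) else μ10 (U₁ ω))
    -- Assumption TI (time invariance)
    (hTI : ∀ g r : Bool, 0 < P {ω | G ω = g ∧ R ω = r} →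
      (P[|{ω | G ω = g ∧ R ω = r}]).map U₀ = (P[|{ω | G ω = g ∧ R ω = r}]).map U₁)
    -- Assumption CONT
    (hCONT : ∀ g : Bool, 0 < P {ω | G ω = g ∧ R ω = true} ∧
      Continuous (cCDF P {ω | G ω = g ∧ R ω = true} U₁) ∧
      StrictMono (cCDF P {ω | G ω = g ∧ R ω = true} U₁))
    -- Assumption M0
    (hμ00c : Continuous μ00) (hμ00 : StrictMono μ00)
    (hμ10c : Continuous μ10) (hμ10 : StrictMono μ10)
    (y : ℝ) (hy : y ∈ Set.range μ10)
    (u : ℝ) (hu : μ10 u = y) :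
    μ00 u = ginv (cCDF P {ω | G ω = false ∧ R ω = true} Y0)
        (cCDF P {ω | G ω = false ∧ R ω = true} Y1 y) := by

  classical
  set A : Set Ω := {ω | G ω = false ∧ R ω = true} with hAdef
  have hPA : 0 < P A := (hCONT false).1
  have hFc := (hCONT false).2.1
  have hFm := (hCONT false).2.2
  set F : ℝ → ℝ := cCDF P A U₁ with hFdef
  -- cCDF of U₀ equals F by time invariance
  have hU0F : ∀ t, cCDF P A U₀ t = F t := by
    intro t
    have hmap := hTI false true hPA
    simp only [cCDF, hFdef]
    have h1 : {ω | U₀ ω ≤ t} = U₀ ⁻¹' Set.Iic t := rfl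
    have h2 : {ω | U₁ ω ≤ t} = U₁ ⁻¹' Set.Iic t := rfl
    rw [h1, h2, ← Measure.map_apply hU₀ measurableSet_Iic,
      ← Measure.map_apply hU₁ measurableSet_Iic, hmap]
  have hA : MeasurableSet A := by
    have : A = G ⁻¹' {false} ∩ R ⁻¹' {true} := by
      ext ω; simp [hAdef]
    rw [this]
    exact (hG (measurableSet_singleton _)).inter (hR (measurableSet_singleton _))
  have hcondA : ∀ s : Set Ω, (P[|A]) s = (P A)⁻¹ * P (A ∩ s) :=
    fun s => ProbabilityTheory.cond_apply hA P s
  -- cCDF of Y1 at y equals F u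
  have hY1F : cCDF P A Y1 y = F u := by
    have hset : {ω | Y1 ω ≤ y} ∩ A = {ω | U₁ ω ≤ u} ∩ A := by
      ext ω
      simp only [Set.mem_inter_iff, Set.mem_setOf_eq, hAdef]
      constructor
      · rintro ⟨hle, hg, hr⟩
        refine ⟨?_, hg, hr⟩
        rw [hY1 ω, hg] at hle
        simp only [Bool.false_eq_true, if_false] at hle
        rw [← hu] at hle
        exact (hμ10.le_iff_le).1 hle
      · rintro ⟨hle, hg, hr⟩
        refine ⟨?_, hg, hr⟩
        rw [hY1 ω, hg]
        simp only [Bool.false_eq_true, if_false]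
        rw [← hu]
        exact hμ10.monotone hle
    have h1 : A ∩ {ω | Y1 ω ≤ y} = A ∩ {ω | U₁ ω ≤ u} := by
      rw [Set.inter_comm, hset, Set.inter_comm]
    simp only [cCDF, hFdef]
    rw [hcondA, hcondA, h1]
  -- cCDF of Y0 at μ00 v equals F v
  have hY0F : ∀ v, cCDF P A Y0 (μ00 v) = F v := by
    intro v
    have h : {ω | Y0 ω ≤ μ00 v} = {ω | U₀ ω ≤ v} := by
      ext ω
      simp only [Set.mem_setOf_eq, hY0 ω]
      exact hμ00.le_iff_le
    have := hU0F v
    simp only [cCDF] at this ⊢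
    rw [h, this]
  -- q := F u is positive
  have hq0 : 0 < F u := by
    have h1 : F (u - 1) < F u := hFm (by linarith)
    have h2 : 0 ≤ F (u - 1) := ENNReal.toReal_nonneg
    linarith
  rw [hY1F]
  -- conclude via sInf characterization
  have hmem : μ00 u ∈ {z : ℝ | F u ≤ cCDF P A Y0 z} := by
    simp only [Set.mem_setOf_eq, hY0F u, le_refl]
  have hlb : ∀ z ∈ {z : ℝ | F u ≤ cCDF P A Y0 z}, μ00 u ≤ z := by
    intro z hz
    simp only [Set.mem_setOf_eq] at hz
    by_contra hzc
    push_neg at hzc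
    by_cases hex : ∃ w, μ00 w ≤ z
    · obtain ⟨w, hw⟩ := hex
      have hwu : w ≤ u := le_of_lt ((hμ00.lt_iff_lt).1 (lt_of_le_of_lt hw hzc))
      have hz_mem : z ∈ Set.Icc (μ00 w) (μ00 u) := ⟨hw, le_of_lt hzc⟩
      obtain ⟨v, hvmem, hv⟩ := intermediate_value_Icc hwu hμ00c.continuousOn hz_mem
      have hvu : v < u := (hμ00.lt_iff_lt).1 (by rw [hv]; exact hzc)
      have : cCDF P A Y0 z = F v := by rw [← hv, hY0F]
      rw [this] at hz
      exact absurd hz (not_le.2 (hFm hvu))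
    · push_neg at hex
      have hempty : {ω | Y0 ω ≤ z} = ∅ := by
        ext ω
        simp only [Set.mem_setOf_eq, Set.mem_empty_iff_false, iff_false, not_le, hY0 ω]
        exact hex (U₀ ω)
      have : cCDF P A Y0 z = 0 := by
        simp only [cCDF, hempty, measure_empty, ENNReal.toReal_zero]
      rw [this] at hz
      linarith
  exact le_antisymm (le_csInf ⟨μ00 u, hmem⟩ hlb) (csInf_le ⟨μ00 u, hlb⟩ hmem)
end

section
/- Suppose Assumption TI holds, μ₀₀ is strictly increasing on ℝ, and μ₁₁ is strictly increasing on ℝ. Then for every (g,r) ∈ {0,1}² with P(G=g, R=r) > 0 and every y in the range of μ₁₁, the conditional CDF of the follow-up treated potential outcome satisfies F_{Y₁(1)|G=g,R=r}(y) = F_{Y₀(0)|G=g,R=r}(T₁(y)), where T₁(y) := μ₀₀(μ₁₁⁻¹(y)) and μ₁₁⁻¹(y) denotes the unique u ∈ ℝ with μ₁₁(u) = y. (Lemma 1, part 2(i).) -/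
open MeasureTheory ProbabilityTheory

/-- **Lemma 1, part 2(i)**: under time invariance (TI) and strict monotonicity of `μ₀₀`
and `μ₁₁`, for every treatment-response subpopulation `(g,r)` with positive probability
and every `y` in the range of `μ₁₁`, the conditional CDF of the follow-up treated
potential outcome `Y₁(1) = μ₁₁(U₁)` at `y` equals the conditional CDF of the baseline
untreated potential outcome `Y₀(0) = μ₀₀(U₀)` at `T₁(y) = μ₀₀(μ₁₁⁻¹(y))`, where
`u = μ₁₁⁻¹(y)` is the unique solution of `μ₁₁(u) = y`. -/
theorem cic_lemma1_part2i {Ω : Type*} [MeasurableSpace Ω]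
    (P : Measure Ω) [IsProbabilityMeasure P]
    (U₀ U₁ : Ω → ℝ) (G R : Ω → Bool)
    (hU₀ : Measurable U₀) (hU₁ : Measurable U₁)
    (hG : Measurable G) (hR : Measurable R)
    (μ00 μ11 : ℝ → ℝ)
    -- Assumption TI (time invariance)
    (hTI : ∀ g r : Bool, 0 < P {ω | G ω = g ∧ R ω = r} →
      (P[|{ω | G ω = g ∧ R ω = r}]).map U₀ = (P[|{ω | G ω = g ∧ R ω = r}]).map U₁)
    -- strict monotonicity of μ₀₀ and μ₁₁
    (hμ00 : StrictMono μ00) (hμ11 : StrictMono μ11)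
    (g r : Bool) (hgr : 0 < P {ω | G ω = g ∧ R ω = r})
    (y : ℝ) (hy : y ∈ Set.range μ11)
    (u : ℝ) (hu : μ11 u = y) :
    cCDF P {ω | G ω = g ∧ R ω = r} (fun ω => μ11 (U₁ ω)) y
      = cCDF P {ω | G ω = g ∧ R ω = r} (fun ω => μ00 (U₀ ω)) (μ00 u) := by
  have h1 : {ω | μ11 (U₁ ω) ≤ y} = U₁ ⁻¹' Set.Iic u := by
    ext ω; simp [← hu, hμ11.le_iff_le]
  have h2 : {ω | μ00 (U₀ ω) ≤ μ00 u} = U₀ ⁻¹' Set.Iic u := by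
    ext ω; simp [hμ00.le_iff_le]
  unfold cCDF
  rw [h1, h2, ← Measure.map_apply hU₁ measurableSet_Iic,
    ← Measure.map_apply hU₀ measurableSet_Iic, hTI g r hgr]
end

section
/- Suppose Assumptions TI, CONT, M0 and M1 hold. Then for every y in the range of μ₁₁, the transformation T₁(y) := μ₀₀(μ₁₁⁻¹(y)) is identified from the treatment respondents: T₁(y) = F_{Y₀|G=1,R=1}^{-1}(F_{Y₁|G=1,R=1}(y)), where Y₀ and Y₁ are the observed baseline and follow-up outcomes (so that on {G=1, R=1}, Y₀ = μ₀₀(U₀) and Y₁ = μ₁₁(U₁)). (Lemma 1, part 2(ii).) -/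
open MeasureTheory ProbabilityTheory

/-- **Lemma 1, part 2(ii)**: under Assumptions TI, CONT, M0 and M1, for every `y` in the
range of `μ₁₁`, the transformation `T₁(y) = μ₀₀(μ₁₁⁻¹(y))` (where `u = μ₁₁⁻¹(y)` is the
unique solution of `μ₁₁(u) = y`) is identified from the treatment respondents:
`T₁(y) = F_{Y₀|G=1,R=1}⁻¹(F_{Y₁|G=1,R=1}(y))`. -/
theorem cic_lemma1_part2ii {Ω : Type*} [MeasurableSpace Ω]
    (P : Measure Ω) [IsProbabilityMeasure P]
    (U₀ U₁ : Ω → ℝ) (G R : Ω → Bool)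
    (hU₀ : Measurable U₀) (hU₁ : Measurable U₁)
    (hG : Measurable G) (hR : Measurable R)
    (μ00 μ10 μ11 : ℝ → ℝ)
    -- observed outcomes
    (Y0 Y1 : Ω → ℝ)
    (hY0 : ∀ ω, Y0 ω = μ00 (U₀ ω))
    (hY1 : ∀ ω, Y1 ω = if G ω = true then μ11 (U₁ ω) else μ10 (U₁ ω))
    -- Assumption TI (time invariance)
    (hTI : ∀ g r : Bool, 0 < P {ω | G ω = g ∧ R ω = r} →
      (P[|{ω | G ω = g ∧ R ω = r}]).map U₀ = (P[|{ω | G ω = g ∧ R ω = r}]).map U₁)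
    -- Assumption CONT
    (hCONT : ∀ g : Bool, 0 < P {ω | G ω = g ∧ R ω = true} ∧
      Continuous (cCDF P {ω | G ω = g ∧ R ω = true} U₁) ∧
      StrictMono (cCDF P {ω | G ω = g ∧ R ω = true} U₁))
    -- Assumption M0
    (hμ00c : Continuous μ00) (hμ00 : StrictMono μ00)
    (hμ10c : Continuous μ10) (hμ10 : StrictMono μ10)
    -- Assumption M1
    (hμ11c : Continuous μ11) (hμ11 : StrictMono μ11)
    (y : ℝ) (hy : y ∈ Set.range μ11)
    (u : ℝ) (hu : μ11 u = y) :
    μ00 u = ginv (cCDF P {ω | G ω = true ∧ R ω = true} Y0)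
        (cCDF P {ω | G ω = true ∧ R ω = true} Y1 y) := by

  have hAm : MeasurableSet {ω | G ω = true ∧ R ω = true} :=
    (hG (measurableSet_singleton true)).inter (hR (measurableSet_singleton true))
  set A := {ω | G ω = true ∧ R ω = true} with hAdef
  have hPA : 0 < P A := (hCONT true).1
  have hF : StrictMono (cCDF P A U₁) := (hCONT true).2.2
  -- cCDF of U₀ equals cCDF of U₁
  have hU0U1 : ∀ t : ℝ, cCDF P A U₀ t = cCDF P A U₁ t := by
    intro t
    have hmap := hTI true true hPA
    have h0 : ((P[|A]).map U₀) (Set.Iic t) = ((P[|A]).map U₁) (Set.Iic t) := by rw [hmap]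
    rw [Measure.map_apply hU₀ measurableSet_Iic, Measure.map_apply hU₁ measurableSet_Iic] at h0
    unfold cCDF
    exact congrArg ENNReal.toReal h0
  -- cCDF of Y0 at μ00 t equals cCDF of U₁ at t
  have hY0eq : ∀ t : ℝ, cCDF P A Y0 (μ00 t) = cCDF P A U₁ t := by
    intro t
    rw [← hU0U1 t]
    have hset : {ω | Y0 ω ≤ μ00 t} = {ω | U₀ ω ≤ t} := by
      ext ω
      simp only [Set.mem_setOf_eq, hY0 ω, hμ00.le_iff_le]
    unfold cCDF
    rw [hset]
  -- cCDF of Y1 at y equals cCDF of U₁ at u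
  have hY1eq : cCDF P A Y1 y = cCDF P A U₁ u := by
    have hset : A ∩ {ω | Y1 ω ≤ y} = A ∩ {ω | U₁ ω ≤ u} := by
      ext ω
      simp only [Set.mem_inter_iff, Set.mem_setOf_eq, hAdef]
      constructor
      · rintro ⟨⟨hGω, hRω⟩, h⟩
        refine ⟨⟨hGω, hRω⟩, ?_⟩
        rw [hY1 ω, if_pos hGω, ← hu, hμ11.le_iff_le] at h
        exact h
      · rintro ⟨⟨hGω, hRω⟩, h⟩
        refine ⟨⟨hGω, hRω⟩, ?_⟩
        rw [hY1 ω, if_pos hGω, ← hu, hμ11.le_iff_le]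
        exact h
    unfold cCDF
    rw [ProbabilityTheory.cond_apply hAm P, ProbabilityTheory.cond_apply hAm P, hset]
  set q := cCDF P A Y1 y with hq
  have hqu : q = cCDF P A U₁ u := hY1eq
  have hmem : μ00 u ∈ {z : ℝ | q ≤ cCDF P A Y0 z} := by
    simp only [Set.mem_setOf_eq, hY0eq u, hqu, le_refl]
  have hqpos : 0 < q := by
    rw [hqu]
    have h1 : cCDF P A U₁ (u - 1) < cCDF P A U₁ u := hF (by linarith)
    have h2 : 0 ≤ cCDF P A U₁ (u - 1) := ENNReal.toReal_nonneg
    linarith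
  have hlb : ∀ z ∈ {z : ℝ | q ≤ cCDF P A Y0 z}, μ00 u ≤ z := by
    intro z hz
    simp only [Set.mem_setOf_eq] at hz
    by_contra hcon
    push_neg at hcon
    by_cases hex : ∃ t : ℝ, μ00 t ≤ z
    · obtain ⟨t, ht⟩ := hex
      have htu : t < u := hμ00.lt_iff_lt.mp (lt_of_le_of_lt ht hcon)
      have hiv : z ∈ μ00 '' Set.Ico t u := by
        apply intermediate_value_Ico htu.le (hμ00c.continuousOn)
        exact ⟨ht, hcon⟩
      obtain ⟨s, hs, hsz⟩ := hiv
      have : cCDF P A Y0 z = cCDF P A U₁ s := by rw [← hsz, hY0eq]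
      rw [this, hqu] at hz
      exact absurd hz (not_le.mpr (hF hs.2))
    · push_neg at hex
      have hempty : cCDF P A Y0 z = 0 := by
        unfold cCDF
        have : {ω | Y0 ω ≤ z} = (∅ : Set Ω) := by
          ext ω
          simp only [Set.mem_setOf_eq, Set.mem_empty_iff_false, iff_false, not_le, hY0 ω]
          exact hex (U₀ ω)
        rw [this]
        simp
      rw [hempty] at hz
      linarith
  unfold ginv
  refine le_antisymm (le_csInf ⟨μ00 u, hmem⟩ hlb) (csInf_le ⟨μ00 u, hlb⟩ hmem)
end

section
/- Suppose Assumptions TI, CONT and M0 hold. Then the counterfactual distribution of the untreated follow-up outcome for treatment respondents is identified: for every y in the range of μ₁₀, F_{Y₁(0)|G=1,R=1}(y) = F_{Y₀|G=1,R=1}(F_{Y₀|G=0,R=1}^{-1}(F_{Y₁|G=0,R=1}(y))). (Proposition 1, equation (3).) -/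
open MeasureTheory ProbabilityTheory

/-- **Proposition 1, equation (3)**: under Assumptions TI, CONT and M0, the counterfactual
distribution of the untreated follow-up outcome `Y₁(0) = μ₁₀(U₁)` for treatment respondents
is identified: for every `y` in the range of `μ₁₀`,
`F_{Y₁(0)|G=1,R=1}(y) = F_{Y₀|G=1,R=1}(F_{Y₀|G=0,R=1}⁻¹(F_{Y₁|G=0,R=1}(y)))`. -/
theorem cic_prop1_eq3 {Ω : Type*} [MeasurableSpace Ω]
    (P : Measure Ω) [IsProbabilityMeasure P]
    (U₀ U₁ : Ω → ℝ) (G R : Ω → Bool)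
    (hU₀ : Measurable U₀) (hU₁ : Measurable U₁)
    (hG : Measurable G) (hR : Measurable R)
    (μ00 μ10 μ11 : ℝ → ℝ)
    -- observed outcomes
    (Y0 Y1 : Ω → ℝ)
    (hY0 : ∀ ω, Y0 ω = μ00 (U₀ ω))
    (hY1 : ∀ ω, Y1 ω = if G ω = true then μ11 (U₁ ω) else μ10 (U₁ ω))
    -- Assumption TI (time invariance)
    (hTI : ∀ g r : Bool, 0 < P {ω | G ω = g ∧ R ω = r} →
      (P[|{ω | G ω = g ∧ R ω = r}]).map U₀ = (P[|{ω | G ω = g ∧ R ω = r}]).map U₁)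
    -- Assumption CONT
    (hCONT : ∀ g : Bool, 0 < P {ω | G ω = g ∧ R ω = true} ∧
      Continuous (cCDF P {ω | G ω = g ∧ R ω = true} U₁) ∧
      StrictMono (cCDF P {ω | G ω = g ∧ R ω = true} U₁))
    -- Assumption M0
    (hμ00c : Continuous μ00) (hμ00 : StrictMono μ00)
    (hμ10c : Continuous μ10) (hμ10 : StrictMono μ10)
    (y : ℝ) (hy : y ∈ Set.range μ10) :
    cCDF P {ω | G ω = true ∧ R ω = true} (fun ω => μ10 (U₁ ω)) y
      = cCDF P {ω | G ω = true ∧ R ω = true} Y0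
          (ginv (cCDF P {ω | G ω = false ∧ R ω = true} Y0)
            (cCDF P {ω | G ω = false ∧ R ω = true} Y1 y)) := by
  classical
  obtain ⟨u, rfl⟩ := hy
  set A₁ := {ω | G ω = true ∧ R ω = true} with hA₁def
  set A₀ := {ω | G ω = false ∧ R ω = true} with hA₀def
  have hA₀m : MeasurableSet A₀ := by
    have : A₀ = G ⁻¹' {false} ∩ R ⁻¹' {true} := by
      ext ω; simp [hA₀def]
    rw [this]
    exact (hG (measurableSet_singleton _)).inter (hR (measurableSet_singleton _))
  obtain ⟨hpos₁, -, -⟩ := hCONT true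
  obtain ⟨hpos₀, -, hsm₀⟩ := hCONT false
  have hmap₁ := hTI true true hpos₁
  have hmap₀ := hTI false true hpos₀
  have hTIm : ∀ (A : Set Ω), (P[|A]).map U₀ = (P[|A]).map U₁ →
      ∀ s : ℝ, (P[|A]) {ω | U₀ ω ≤ s} = (P[|A]) {ω | U₁ ω ≤ s} := by
    intro A hmap s
    calc (P[|A]) {ω | U₀ ω ≤ s} = (P[|A]).map U₀ (Set.Iic s) :=
          (Measure.map_apply hU₀ measurableSet_Iic).symm
      _ = (P[|A]).map U₁ (Set.Iic s) := by rw [hmap]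
      _ = (P[|A]) {ω | U₁ ω ≤ s} := Measure.map_apply hU₁ measurableSet_Iic
  -- (b) : cCDF of Y0 given A₀ at points of range μ00
  have hY0set : ∀ s : ℝ, {ω | Y0 ω ≤ μ00 s} = {ω | U₀ ω ≤ s} := by
    intro s; ext ω; simp only [Set.mem_setOf_eq, hY0 ω, hμ00.le_iff_le]
  have hb : ∀ s : ℝ, cCDF P A₀ Y0 (μ00 s) = cCDF P A₀ U₁ s := by
    intro s
    unfold cCDF
    rw [hY0set s, hTIm A₀ hmap₀ s]
  -- (c) : inner cCDF of Y1
  have hq : cCDF P A₀ Y1 (μ10 u) = cCDF P A₀ U₁ u := by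
    have hset : A₀ ∩ {ω | Y1 ω ≤ μ10 u} = A₀ ∩ {ω | U₁ ω ≤ u} := by
      ext ω
      simp only [Set.mem_inter_iff, Set.mem_setOf_eq, hA₀def]
      constructor
      · rintro ⟨⟨hGf, hRt⟩, hle⟩
        rw [hY1 ω, hGf] at hle
        simp only [Bool.false_eq_true, if_false] at hle
        exact ⟨⟨hGf, hRt⟩, hμ10.le_iff_le.mp hle⟩
      · rintro ⟨⟨hGf, hRt⟩, hle⟩
        refine ⟨⟨hGf, hRt⟩, ?_⟩
        rw [hY1 ω, hGf]
        simpa using hμ10.le_iff_le.mpr hle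
    unfold cCDF
    rw [cond_apply hA₀m, cond_apply hA₀m, hset]
  -- (f) : the generalized inverse
  set q := cCDF P A₀ U₁ u with hqdef
  have hmem : q ≤ cCDF P A₀ Y0 (μ00 u) := le_of_eq (hb u).symm
  have hlb : ∀ t ∈ {t : ℝ | q ≤ cCDF P A₀ Y0 t}, μ00 u ≤ t := by
    intro t ht
    simp only [Set.mem_setOf_eq] at ht
    by_contra hcon
    push_neg at hcon
    by_cases hex : ∃ s, μ00 s ≤ t
    · obtain ⟨s, hs⟩ := hex
      have hsu : s ≤ u := (hμ00.le_iff_le.mp (hs.trans hcon.le))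
      have htI : t ∈ Set.Icc (μ00 s) (μ00 u) := ⟨hs, hcon.le⟩
      obtain ⟨s', -, hs't⟩ := intermediate_value_Icc hsu hμ00c.continuousOn htI
      have hs'u : s' < u := hμ00.lt_iff_lt.mp (by rw [hs't]; exact hcon)
      have h1 : cCDF P A₀ Y0 t = cCDF P A₀ U₁ s' := by rw [← hs't]; exact hb s'
      have h2 : cCDF P A₀ U₁ s' < q := hsm₀ hs'u
      rw [h1] at ht; linarith
    · push_neg at hex
      have hempty : {ω | Y0 ω ≤ t} = (∅ : Set Ω) := by
        ext ω
        simp only [Set.mem_setOf_eq, Set.mem_empty_iff_false, iff_false, not_le, hY0 ω]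
        exact hex (U₀ ω)
      have h0 : cCDF P A₀ Y0 t = 0 := by unfold cCDF; rw [hempty]; simp
      have hqpos : 0 < q :=
        lt_of_le_of_lt (ENNReal.toReal_nonneg : (0:ℝ) ≤ cCDF P A₀ U₁ (u - 1))
          (hsm₀ (show u - 1 < u by linarith))
      rw [h0] at ht; linarith
  have hginv : ginv (cCDF P A₀ Y0) q = μ00 u := by
    unfold ginv
    refine le_antisymm (csInf_le ⟨μ00 u, hlb⟩ hmem) (le_csInf ⟨μ00 u, hmem⟩ hlb)
  -- LHS
  have hlhs : cCDF P A₁ (fun ω => μ10 (U₁ ω)) (μ10 u) = cCDF P A₁ U₁ u := by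
    unfold cCDF
    congr 2
    ext ω; simp only [Set.mem_setOf_eq, hμ10.le_iff_le]
  -- RHS
  have hrhs : cCDF P A₁ Y0 (μ00 u) = cCDF P A₁ U₁ u := by
    unfold cCDF
    rw [hY0set u, hTIm A₁ hmap₁ u]
  rw [hlhs, hq, hginv, hrhs]
end

section
/- Suppose Assumptions TI, CONT and M0 hold, and that μ₁₀(U₀), μ₁₀(U₁) and μ₁₁(U₁) are P-integrable. Then the average treatment effect on the treated respondents is identified: E[Y₁(1) − Y₁(0) | G=1, R=1] = E[Y₁ | G=1, R=1] − E[F_{Y₁|G=0,R=1}^{-1}(F_{Y₀|G=0,R=1}(Y₀)) | G=1, R=1]. (Proposition 1, equation (4): ATT-R.) -/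
open MeasureTheory ProbabilityTheory

section Aux

variable {Ω : Type*} [MeasurableSpace Ω] (P : Measure Ω)

lemma cExp_eq_integral_cond (A : Set Ω) (f : Ω → ℝ) :
    cExp P A f = ∫ ω, f ω ∂(P[|A]) := by
  rw [cExp, ProbabilityTheory.cond, integral_smul_measure, ENNReal.toReal_inv,
    smul_eq_mul, div_eq_inv_mul]

lemma cCDF_comp_strictMono (A : Set Ω) (X : Ω → ℝ) {μ : ℝ → ℝ} (hμ : StrictMono μ) (u : ℝ) :
    cCDF P A (fun ω => μ (X ω)) (μ u) = cCDF P A X u := by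
  unfold cCDF
  congr 2
  ext ω
  simp [hμ.le_iff_le]

lemma ginv_cCDF (A : Set Ω) (X : Ω → ℝ) {μ : ℝ → ℝ} (hμc : Continuous μ) (hμ : StrictMono μ)
    (hF : StrictMono (cCDF P A X)) (u : ℝ) :
    ginv (cCDF P A (fun ω => μ (X ω))) (cCDF P A X u) = μ u := by
  set F := cCDF P A X with hFdef
  set Gf := cCDF P A (fun ω => μ (X ω)) with hGdef
  have hFpos : 0 < F u := by
    have h1 : F (u - 1) < F u := hF (by linarith)
    have h0 : 0 ≤ F (u - 1) := ENNReal.toReal_nonneg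
    linarith
  have hmem : F u ≤ Gf (μ u) := le_of_eq (cCDF_comp_strictMono P A X hμ u).symm
  have hlb : ∀ y, y < μ u → ¬ (F u ≤ Gf y) := by
    intro y hy
    by_cases hr : ∃ v, μ v = y
    · obtain ⟨v, rfl⟩ := hr
      have hvu : v < u := hμ.lt_iff_lt.mp hy
      rw [hGdef, cCDF_comp_strictMono P A X hμ v]
      exact not_le.2 (hF hvu)
    · have hempty : {ω | μ (X ω) ≤ y} = ∅ := by
        ext ω
        simp only [Set.mem_setOf_eq, Set.mem_empty_iff_false, iff_false, not_le]
        by_contra hle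
        push_neg at hle
        have hxu : X ω ≤ u := (hμ.le_iff_le.mp (hle.trans hy.le))
        have : y ∈ Set.Icc (μ (X ω)) (μ u) := ⟨hle, hy.le⟩
        obtain ⟨v, _, hv⟩ := intermediate_value_Icc hxu hμc.continuousOn this
        exact hr ⟨v, hv⟩
      have hG0 : Gf y = 0 := by
        rw [hGdef]; unfold cCDF; rw [hempty]; simp
      rw [hG0]
      exact not_le.2 hFpos
  have hbdd : ∀ y ∈ {y : ℝ | F u ≤ Gf y}, μ u ≤ y := by
    intro y hy
    by_contra h
    exact hlb y (not_le.1 h) hy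
  refine le_antisymm (csInf_le ⟨μ u, hbdd⟩ hmem) (le_csInf ⟨μ u, hmem⟩ hbdd)

end Aux

/-- **Proposition 1, equation (4) (ATT-R)**: under Assumptions TI, CONT and M0 and
integrability of `μ₁₀(U₀)`, `μ₁₀(U₁)` and `μ₁₁(U₁)`, the average treatment effect on the
treated respondents is identified:
`E[Y₁(1) − Y₁(0) | G=1, R=1]
  = E[Y₁ | G=1,R=1] − E[F_{Y₁|G=0,R=1}⁻¹(F_{Y₀|G=0,R=1}(Y₀)) | G=1,R=1]`. -/
theorem cic_prop1_eq4_ATTR {Ω : Type*} [MeasurableSpace Ω]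
    (P : Measure Ω) [IsProbabilityMeasure P]
    (U₀ U₁ : Ω → ℝ) (G R : Ω → Bool)
    (hU₀ : Measurable U₀) (hU₁ : Measurable U₁)
    (hG : Measurable G) (hR : Measurable R)
    (μ00 μ10 μ11 : ℝ → ℝ)
    -- observed outcomes
    (Y0 Y1 : Ω → ℝ)
    (hY0 : ∀ ω, Y0 ω = μ00 (U₀ ω))
    (hY1 : ∀ ω, Y1 ω = if G ω = true then μ11 (U₁ ω) else μ10 (U₁ ω))
    -- Assumption TI (time invariance)
    (hTI : ∀ g r : Bool, 0 < P {ω | G ω = g ∧ R ω = r} →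
      (P[|{ω | G ω = g ∧ R ω = r}]).map U₀ = (P[|{ω | G ω = g ∧ R ω = r}]).map U₁)
    -- Assumption CONT
    (hCONT : ∀ g : Bool, 0 < P {ω | G ω = g ∧ R ω = true} ∧
      Continuous (cCDF P {ω | G ω = g ∧ R ω = true} U₁) ∧
      StrictMono (cCDF P {ω | G ω = g ∧ R ω = true} U₁))
    -- Assumption M0
    (hμ00c : Continuous μ00) (hμ00 : StrictMono μ00)
    (hμ10c : Continuous μ10) (hμ10 : StrictMono μ10)
    -- integrability
    (hI1 : Integrable (fun ω => μ10 (U₀ ω)) P)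
    (hI2 : Integrable (fun ω => μ10 (U₁ ω)) P)
    (hI3 : Integrable (fun ω => μ11 (U₁ ω)) P) :
    cExp P {ω | G ω = true ∧ R ω = true} (fun ω => μ11 (U₁ ω) - μ10 (U₁ ω))
      = cExp P {ω | G ω = true ∧ R ω = true} Y1
        - cExp P {ω | G ω = true ∧ R ω = true}
            (fun ω => ginv (cCDF P {ω | G ω = false ∧ R ω = true} Y1)
              (cCDF P {ω | G ω = false ∧ R ω = true} Y0 (Y0 ω))) := by
  set T := {ω | G ω = true ∧ R ω = true} with hTdef
  set A := {ω | G ω = false ∧ R ω = true} with hAdef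
  have hTm : MeasurableSet T := by
    have : T = G ⁻¹' {true} ∩ R ⁻¹' {true} := by ext ω; simp [hTdef]
    rw [this]
    exact (hG (measurableSet_singleton true)).inter (hR (measurableSet_singleton true))
  have hAm : MeasurableSet A := by
    have : A = G ⁻¹' {false} ∩ R ⁻¹' {true} := by ext ω; simp [hAdef]
    rw [this]
    exact (hG (measurableSet_singleton false)).inter (hR (measurableSet_singleton true))
  have hTpos : 0 < P T := (hCONT true).1
  have hApos : 0 < P A := (hCONT false).1
  -- Step 1: on A, Y1 agrees with μ10 ∘ U₁, hence same conditional CDF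
  have hY1A : cCDF P A Y1 = cCDF P A (fun ω => μ10 (U₁ ω)) := by
    funext y
    unfold cCDF
    congr 1
    rw [cond_apply hAm, cond_apply hAm]
    have hset : A ∩ {ω | Y1 ω ≤ y} = A ∩ {ω | μ10 (U₁ ω) ≤ y} := by
      ext ω
      simp only [Set.mem_inter_iff, Set.mem_setOf_eq, hAdef]
      constructor
      · rintro ⟨⟨hg, hr⟩, h⟩
        refine ⟨⟨hg, hr⟩, ?_⟩
        rw [hY1 ω, hg] at h
        simpa using h
      · rintro ⟨⟨hg, hr⟩, h⟩
        refine ⟨⟨hg, hr⟩, ?_⟩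
        rw [hY1 ω, hg]
        simpa using h
    rw [hset]
  -- Step 2: cCDF of Y0 at Y0 ω equals cCDF of U₁ at U₀ ω
  have hU0U1 : cCDF P A U₀ = cCDF P A U₁ := by
    funext y
    unfold cCDF
    have h₀ : {ω | U₀ ω ≤ y} = U₀ ⁻¹' Set.Iic y := rfl
    have h₁ : {ω | U₁ ω ≤ y} = U₁ ⁻¹' Set.Iic y := rfl
    rw [h₀, h₁, ← Measure.map_apply hU₀ measurableSet_Iic,
      ← Measure.map_apply hU₁ measurableSet_Iic, hTI false true hApos]
  have hY0eq : ∀ ω, cCDF P A Y0 (Y0 ω) = cCDF P A U₁ (U₀ ω) := by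
    intro ω
    have h1 : cCDF P A Y0 = cCDF P A (fun ω => μ00 (U₀ ω)) := by
      unfold cCDF
      funext y
      congr 2
      ext ω'
      simp [hY0 ω']
    rw [h1, hY0 ω, cCDF_comp_strictMono P A U₀ hμ00, hU0U1]
  -- Step 3: pointwise identification of the counterfactual
  have hpt : ∀ ω, ginv (cCDF P A Y1) (cCDF P A Y0 (Y0 ω)) = μ10 (U₀ ω) := by
    intro ω
    rw [hY1A, hY0eq ω]
    exact ginv_cCDF P A U₁ hμ10c hμ10 (hCONT false).2.2 (U₀ ω)
  -- Step 4: rewrite the last conditional expectation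
  have hlast : cExp P T (fun ω => ginv (cCDF P A Y1) (cCDF P A Y0 (Y0 ω)))
      = cExp P T (fun ω => μ10 (U₀ ω)) := by
    congr 1
    funext ω
    exact hpt ω
  -- Step 5: E[μ10∘U₀ | T] = E[μ10∘U₁ | T] by TI
  have hTne : P T ≠ 0 := hTpos.ne'
  have hTnetop : P T ≠ ⊤ := (measure_lt_top P T).ne
  have hswap : cExp P T (fun ω => μ10 (U₀ ω)) = cExp P T (fun ω => μ10 (U₁ ω)) := by
    rw [cExp_eq_integral_cond, cExp_eq_integral_cond]
    have h0 : ∫ ω, μ10 (U₀ ω) ∂(P[|T]) = ∫ x, μ10 x ∂((P[|T]).map U₀) :=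
      (integral_map hU₀.aemeasurable hμ10c.aestronglyMeasurable).symm
    have h1 : ∫ ω, μ10 (U₁ ω) ∂(P[|T]) = ∫ x, μ10 x ∂((P[|T]).map U₁) :=
      (integral_map hU₁.aemeasurable hμ10c.aestronglyMeasurable).symm
    rw [h0, h1, hTI true true hTpos]
  -- Step 6: E[Y1 | T] = E[μ11∘U₁ | T]
  have hY1T : cExp P T Y1 = cExp P T (fun ω => μ11 (U₁ ω)) := by
    unfold cExp
    congr 1
    refine setIntegral_congr_fun hTm ?_
    intro ω hω
    rw [hY1 ω, hω.1]
    simp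
  -- Step 7: linearity
  have hsub : cExp P T (fun ω => μ11 (U₁ ω) - μ10 (U₁ ω))
      = cExp P T (fun ω => μ11 (U₁ ω)) - cExp P T (fun ω => μ10 (U₁ ω)) := by
    unfold cExp
    rw [← sub_div]
    congr 1
    exact integral_sub (hI3.restrict) (hI2.restrict)
  rw [hsub, hY1T, hlast, hswap]
end

section
/- Suppose Assumptions TI, CONT, M0 and M1 hold. Then the counterfactual distribution of the treated follow-up outcome for control respondents is identified: for every y in the range of μ₁₁, F_{Y₁(1)|G=0,R=1}(y) = F_{Y₀|G=0,R=1}(F_{Y₀|G=1,R=1}^{-1}(F_{Y₁|G=1,R=1}(y))). (Proposition 1, equation (5).) -/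
open MeasureTheory ProbabilityTheory

lemma cCDF_comp {Ω : Type*} [MeasurableSpace Ω] (P : Measure Ω) (A : Set Ω) (X : Ω → ℝ)
    {μ : ℝ → ℝ} (hμ : StrictMono μ) (u : ℝ) :
    cCDF P A (fun ω => μ (X ω)) (μ u) = cCDF P A X u := by
  unfold cCDF
  congr 2
  ext ω
  simp [hμ.le_iff_le]

lemma cCDF_congr {Ω : Type*} [MeasurableSpace Ω] (P : Measure Ω) {A : Set Ω}
    (hA : MeasurableSet A) {f g : Ω → ℝ} (h : ∀ ω ∈ A, f ω = g ω) (y : ℝ) :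
    cCDF P A f y = cCDF P A g y := by
  unfold cCDF
  rw [cond_apply hA, cond_apply hA]
  have : A ∩ {ω | f ω ≤ y} = A ∩ {ω | g ω ≤ y} := by
    ext ω
    simp only [Set.mem_inter_iff, Set.mem_setOf_eq]
    exact and_congr_right fun hω => by rw [h ω hω]
  rw [this]

lemma cCDF_map_eq {Ω : Type*} [MeasurableSpace Ω] (P : Measure Ω) (A : Set Ω)
    {X₀ X₁ : Ω → ℝ} (hX₀ : Measurable X₀) (hX₁ : Measurable X₁)
    (h : (P[|A]).map X₀ = (P[|A]).map X₁) (y : ℝ) :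
    cCDF P A X₀ y = cCDF P A X₁ y := by
  unfold cCDF
  have h0 : (P[|A]) {ω | X₀ ω ≤ y} = ((P[|A]).map X₀) (Set.Iic y) := by
    rw [Measure.map_apply hX₀ measurableSet_Iic]; rfl
  have h1 : (P[|A]) {ω | X₁ ω ≤ y} = ((P[|A]).map X₁) (Set.Iic y) := by
    rw [Measure.map_apply hX₁ measurableSet_Iic]; rfl
  rw [h0, h1, h]

/-- **Proposition 1, equation (5)**: under Assumptions TI, CONT, M0 and M1, the
counterfactual distribution of the treated follow-up outcome `Y₁(1) = μ₁₁(U₁)` for control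
respondents is identified: for every `y` in the range of `μ₁₁`,
`F_{Y₁(1)|G=0,R=1}(y) = F_{Y₀|G=0,R=1}(F_{Y₀|G=1,R=1}⁻¹(F_{Y₁|G=1,R=1}(y)))`. -/
theorem cic_prop1_eq5 {Ω : Type*} [MeasurableSpace Ω]
    (P : Measure Ω) [IsProbabilityMeasure P]
    (U₀ U₁ : Ω → ℝ) (G R : Ω → Bool)
    (hU₀ : Measurable U₀) (hU₁ : Measurable U₁)
    (hG : Measurable G) (hR : Measurable R)
    (μ00 μ10 μ11 : ℝ → ℝ)
    -- observed outcomes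
    (Y0 Y1 : Ω → ℝ)
    (hY0 : ∀ ω, Y0 ω = μ00 (U₀ ω))
    (hY1 : ∀ ω, Y1 ω = if G ω = true then μ11 (U₁ ω) else μ10 (U₁ ω))
    -- Assumption TI (time invariance)
    (hTI : ∀ g r : Bool, 0 < P {ω | G ω = g ∧ R ω = r} →
      (P[|{ω | G ω = g ∧ R ω = r}]).map U₀ = (P[|{ω | G ω = g ∧ R ω = r}]).map U₁)
    -- Assumption CONT
    (hCONT : ∀ g : Bool, 0 < P {ω | G ω = g ∧ R ω = true} ∧
      Continuous (cCDF P {ω | G ω = g ∧ R ω = true} U₁) ∧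
      StrictMono (cCDF P {ω | G ω = g ∧ R ω = true} U₁))
    -- Assumption M0
    (hμ00c : Continuous μ00) (hμ00 : StrictMono μ00)
    (hμ10c : Continuous μ10) (hμ10 : StrictMono μ10)
    -- Assumption M1
    (hμ11c : Continuous μ11) (hμ11 : StrictMono μ11)
    (y : ℝ) (hy : y ∈ Set.range μ11) :
    cCDF P {ω | G ω = false ∧ R ω = true} (fun ω => μ11 (U₁ ω)) y
      = cCDF P {ω | G ω = false ∧ R ω = true} Y0
          (ginv (cCDF P {ω | G ω = true ∧ R ω = true} Y0)
            (cCDF P {ω | G ω = true ∧ R ω = true} Y1 y)) := by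
  obtain ⟨u, rfl⟩ := hy
  set A₀ : Set Ω := {ω | G ω = false ∧ R ω = true} with hA₀def
  set A₁ : Set Ω := {ω | G ω = true ∧ R ω = true} with hA₁def
  have hA₁ : MeasurableSet A₁ := by
    have : A₁ = G ⁻¹' {true} ∩ R ⁻¹' {true} := by ext ω; simp [hA₁def]
    rw [this]
    exact (hG (MeasurableSet.singleton true)).inter (hR (MeasurableSet.singleton true))
  have hP₀ := (hCONT false).1
  have hP₁ := (hCONT true).1
  have F₁sm : StrictMono (cCDF P A₁ U₁) := (hCONT true).2.2
  have hY0fun : Y0 = fun ω => μ00 (U₀ ω) := funext hY0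
  -- Step: cCDF A₁ Y1 (μ11 u) = cCDF A₁ U₁ u =: q
  have hstep1 : cCDF P A₁ Y1 (μ11 u) = cCDF P A₁ U₁ u := by
    have h1 : cCDF P A₁ Y1 (μ11 u) = cCDF P A₁ (fun ω => μ11 (U₁ ω)) (μ11 u) :=
      cCDF_congr P hA₁ (fun ω hω => by simp [hY1 ω, hω.1]) (μ11 u)
    rw [h1, cCDF_comp P A₁ U₁ hμ11 u]
  set q := cCDF P A₁ U₁ u with hq
  -- q > 0
  have hqpos : 0 < q := by
    have h1 : cCDF P A₁ U₁ (u - 1) < q := F₁sm (by linarith)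
    have h2 : 0 ≤ cCDF P A₁ U₁ (u - 1) := ENNReal.toReal_nonneg
    linarith
  -- cCDF A₁ Y0 (μ00 v) = cCDF A₁ U₁ v
  have hY0A₁ : ∀ v, cCDF P A₁ Y0 (μ00 v) = cCDF P A₁ U₁ v := by
    intro v
    rw [hY0fun, cCDF_comp P A₁ U₀ hμ00 v]
    exact cCDF_map_eq P A₁ hU₀ hU₁ (hTI true true hP₁) v
  -- the ginv equals μ00 u
  have hginv : ginv (cCDF P A₁ Y0) q = μ00 u := by
    have hleast : IsLeast {t : ℝ | q ≤ cCDF P A₁ Y0 t} (μ00 u) := by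
      constructor
      · simp only [Set.mem_setOf_eq, hY0A₁ u, ← hq, le_refl]
      · intro t ht
        simp only [Set.mem_setOf_eq] at ht
        by_contra hlt
        push_neg at hlt
        by_cases hrange : t ∈ Set.range μ00
        · obtain ⟨v, rfl⟩ := hrange
          have hvu : v < u := hμ00.lt_iff_lt.mp hlt
          have : cCDF P A₁ Y0 (μ00 v) < q := by rw [hY0A₁ v]; exact F₁sm hvu
          linarith
        · have hall : ∀ v, t < μ00 v := by
            intro v
            by_contra hv
            push_neg at hv
            exact hrange (intermediate_value_univ v u hμ00c ⟨hv, le_of_lt hlt⟩)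
          have hempty : {ω | Y0 ω ≤ t} = (∅ : Set Ω) := by
            ext ω
            simp only [Set.mem_setOf_eq, Set.mem_empty_iff_false, iff_false, not_le, hY0 ω]
            exact hall (U₀ ω)
          have : cCDF P A₁ Y0 t = 0 := by unfold cCDF; rw [hempty]; simp
          rw [this] at ht
          linarith
    exact hleast.csInf_eq
  rw [hstep1, hginv]
  -- final: LHS = cCDF A₀ U₁ u = cCDF A₀ U₀ u = cCDF A₀ Y0 (μ00 u)
  rw [cCDF_comp P A₀ U₁ hμ11 u, hY0fun, cCDF_comp P A₀ U₀ hμ00 u]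
  exact (cCDF_map_eq P A₀ hU₀ hU₁ (hTI false true hP₀) u).symm
end

section
/- Suppose Assumptions TI, CONT, M0 and M1 hold, and that μ₁₁(U₀), μ₁₁(U₁) and μ₁₀(U₁) are P-integrable. Then the average treatment effect on the untreated (control) respondents is identified: E[Y₁(1) − Y₁(0) | G=0, R=1] = E[F_{Y₁|G=1,R=1}^{-1}(F_{Y₀|G=1,R=1}(Y₀)) | G=0, R=1] − E[Y₁ | G=0, R=1]. (Proposition 1, equation (6): ATU-R.) -/
open MeasureTheory ProbabilityTheory

private lemma cExp_eq_cond {Ω : Type*} [MeasurableSpace Ω] (P : Measure Ω) (A : Set Ω)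
    (f : Ω → ℝ) : cExp P A f = ∫ x, f x ∂(P[|A]) := by
  rw [ProbabilityTheory.cond, integral_smul_measure, ENNReal.toReal_inv]
  simp [cExp, div_eq_inv_mul]

/-- **Proposition 1, equation (6) (ATU-R)**: under Assumptions TI, CONT, M0 and M1 and
integrability of `μ₁₁(U₀)`, `μ₁₁(U₁)` and `μ₁₀(U₁)`, the average treatment effect on the
untreated (control) respondents is identified:
`E[Y₁(1) − Y₁(0) | G=0, R=1]
  = E[F_{Y₁|G=1,R=1}⁻¹(F_{Y₀|G=1,R=1}(Y₀)) | G=0,R=1] − E[Y₁ | G=0,R=1]`. -/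
theorem cic_prop1_eq6_ATUR {Ω : Type*} [MeasurableSpace Ω]
    (P : Measure Ω) [IsProbabilityMeasure P]
    (U₀ U₁ : Ω → ℝ) (G R : Ω → Bool)
    (hU₀ : Measurable U₀) (hU₁ : Measurable U₁)
    (hG : Measurable G) (hR : Measurable R)
    (μ00 μ10 μ11 : ℝ → ℝ)
    -- observed outcomes
    (Y0 Y1 : Ω → ℝ)
    (hY0 : ∀ ω, Y0 ω = μ00 (U₀ ω))
    (hY1 : ∀ ω, Y1 ω = if G ω = true then μ11 (U₁ ω) else μ10 (U₁ ω))
    -- Assumption TI (time invariance)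
    (hTI : ∀ g r : Bool, 0 < P {ω | G ω = g ∧ R ω = r} →
      (P[|{ω | G ω = g ∧ R ω = r}]).map U₀ = (P[|{ω | G ω = g ∧ R ω = r}]).map U₁)
    -- Assumption CONT
    (hCONT : ∀ g : Bool, 0 < P {ω | G ω = g ∧ R ω = true} ∧
      Continuous (cCDF P {ω | G ω = g ∧ R ω = true} U₁) ∧
      StrictMono (cCDF P {ω | G ω = g ∧ R ω = true} U₁))
    -- Assumption M0
    (hμ00c : Continuous μ00) (hμ00 : StrictMono μ00)
    (hμ10c : Continuous μ10) (hμ10 : StrictMono μ10)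
    -- Assumption M1
    (hμ11c : Continuous μ11) (hμ11 : StrictMono μ11)
    -- integrability
    (hI1 : Integrable (fun ω => μ11 (U₀ ω)) P)
    (hI2 : Integrable (fun ω => μ11 (U₁ ω)) P)
    (hI3 : Integrable (fun ω => μ10 (U₁ ω)) P) :
    cExp P {ω | G ω = false ∧ R ω = true} (fun ω => μ11 (U₁ ω) - μ10 (U₁ ω))
      = cExp P {ω | G ω = false ∧ R ω = true}
          (fun ω => ginv (cCDF P {ω | G ω = true ∧ R ω = true} Y1)
            (cCDF P {ω | G ω = true ∧ R ω = true} Y0 (Y0 ω)))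
        - cExp P {ω | G ω = false ∧ R ω = true} Y1 := by
  set A : Set Ω := {ω | G ω = false ∧ R ω = true} with hAdef
  set B : Set Ω := {ω | G ω = true ∧ R ω = true} with hBdef
  have hAm : MeasurableSet A := by
    have : A = G ⁻¹' {false} ∩ R ⁻¹' {true} := by ext ω; simp [hAdef]
    rw [this]
    exact (hG (measurableSet_singleton false)).inter (hR (measurableSet_singleton true))
  have hBm : MeasurableSet B := by
    have : B = G ⁻¹' {true} ∩ R ⁻¹' {true} := by ext ω; simp [hBdef]
    rw [this]
    exact (hG (measurableSet_singleton true)).inter (hR (measurableSet_singleton true))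
  have hApos : 0 < P A := (hCONT false).1
  have hBpos : 0 < P B := (hCONT true).1
  set H : ℝ → ℝ := cCDF P B U₁ with hHdef
  have hHmono : StrictMono H := (hCONT true).2.2
  have hHnn : ∀ y, 0 ≤ H y := fun y => ENNReal.toReal_nonneg
  -- conditional measure applied to any set
  have hcondB : ∀ S : Set Ω, (P[|B]) S = (P B)⁻¹ * P (S ∩ B) := by
    intro S
    rw [ProbabilityTheory.cond, Measure.smul_apply, Measure.restrict_apply' hBm, smul_eq_mul]
  -- Step a : cCDF of U₀ given B equals H
  have hmapB := hTI true true hBpos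
  have hU0cdf : ∀ y, cCDF P B U₀ y = H y := by
    intro y
    have h0 : cCDF P B U₀ y = (((P[|B]).map U₀) (Set.Iic y)).toReal := by
      rw [Measure.map_apply hU₀ measurableSet_Iic]; rfl
    have h1 : H y = (((P[|B]).map U₁) (Set.Iic y)).toReal := by
      rw [Measure.map_apply hU₁ measurableSet_Iic]; rfl
    rw [h0, hmapB, h1]
  -- Step b : cCDF of Y1 given B equals cCDF of μ11 ∘ U₁ given B
  have hY1cdf : ∀ y, cCDF P B Y1 y = cCDF P B (fun ω => μ11 (U₁ ω)) y := by
    intro y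
    have hset : {ω | Y1 ω ≤ y} ∩ B = {ω | μ11 (U₁ ω) ≤ y} ∩ B := by
      ext ω
      simp only [Set.mem_inter_iff, Set.mem_setOf_eq, hBdef]
      constructor
      · rintro ⟨h1, h2, h3⟩; rw [hY1 ω, if_pos h2] at h1; exact ⟨h1, h2, h3⟩
      · rintro ⟨h1, h2, h3⟩; rw [hY1 ω, if_pos h2]; exact ⟨h1, h2, h3⟩
    unfold cCDF
    rw [hcondB, hcondB, hset]
  -- Step c : cCDF of μ11∘U₁ at μ11 u is H u
  have hF1val : ∀ u, cCDF P B Y1 (μ11 u) = H u := by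
    intro u
    rw [hY1cdf]
    have hset : {ω | μ11 (U₁ ω) ≤ μ11 u} = {ω | U₁ ω ≤ u} := by
      ext ω; exact hμ11.le_iff_le
    unfold cCDF
    rw [hset]
    rfl
  -- Step d : cCDF of Y0 at μ00 u is H u
  have hF0val : ∀ u, cCDF P B Y0 (μ00 u) = H u := by
    intro u
    rw [← hU0cdf u]
    have hset : {ω | Y0 ω ≤ μ00 u} = {ω | U₀ ω ≤ u} := by
      ext ω; rw [Set.mem_setOf_eq, Set.mem_setOf_eq, hY0 ω, hμ00.le_iff_le]
    unfold cCDF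
    rw [hset]
  -- Step e : ginv of F1 at H u is μ11 u
  have hginv : ∀ u, ginv (cCDF P B Y1) (H u) = μ11 u := by
    intro u
    have hmem : μ11 u ∈ {y : ℝ | H u ≤ cCDF P B Y1 y} := by
      simp only [Set.mem_setOf_eq, hF1val u, le_refl]
    have hlb : ∀ y ∈ {y : ℝ | H u ≤ cCDF P B Y1 y}, μ11 u ≤ y := by
      intro y hy
      by_contra hcon
      push_neg at hcon
      simp only [Set.mem_setOf_eq] at hy
      have hlt : cCDF P B Y1 y < H u := by
        by_cases hex : ∃ w, μ11 w ≤ y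
        · obtain ⟨w, hw⟩ := hex
          have hwu : w ≤ u := le_of_lt (hμ11.lt_iff_lt.mp (lt_of_le_of_lt hw hcon))
          have hyIcc : y ∈ Set.Icc (μ11 w) (μ11 u) := ⟨hw, le_of_lt hcon⟩
          obtain ⟨v, hv, hveq⟩ := intermediate_value_Icc hwu hμ11c.continuousOn hyIcc
          have hvu : v < u := hμ11.lt_iff_lt.mp (hveq ▸ hcon)
          calc cCDF P B Y1 y = H v := by rw [← hveq, hF1val v]
            _ < H u := hHmono hvu
        · push_neg at hex
          have hempty : {ω | Y1 ω ≤ y} ∩ B = ∅ := by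
            apply Set.eq_empty_iff_forall_notMem.mpr
            rintro ω ⟨h1, h2, h3⟩
            simp only [Set.mem_setOf_eq] at h1
            rw [hY1 ω, if_pos h2] at h1
            exact not_le_of_gt (hex (U₁ ω)) h1
          have h0 : cCDF P B Y1 y = 0 := by
            unfold cCDF; rw [hcondB, hempty]; simp
          rw [h0]
          exact lt_of_le_of_lt (hHnn (u - 1)) (hHmono (by linarith))
      exact absurd hy (not_le_of_gt hlt)
    exact le_antisymm (csInf_le ⟨μ11 u, hlb⟩ hmem) (le_csInf ⟨μ11 u, hmem⟩ hlb)
  -- pointwise identification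
  have hpt : (fun ω => ginv (cCDF P B Y1) (cCDF P B Y0 (Y0 ω)))
      = fun ω => μ11 (U₀ ω) := by
    funext ω
    rw [hY0 ω, hF0val (U₀ ω), hginv (U₀ ω)]
  -- cExp over A of μ11∘U₀ equals that of μ11∘U₁ by TI on A
  have hmapA := hTI false true hApos
  have hswap : cExp P A (fun ω => μ11 (U₀ ω)) = cExp P A (fun ω => μ11 (U₁ ω)) := by
    rw [cExp_eq_cond, cExp_eq_cond,
      ← integral_map hU₀.aemeasurable hμ11c.measurable.aestronglyMeasurable,
      hmapA,
      integral_map hU₁.aemeasurable hμ11c.measurable.aestronglyMeasurable]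
  -- cExp over A of Y1 equals that of μ10 ∘ U₁
  have hY1A : cExp P A Y1 = cExp P A (fun ω => μ10 (U₁ ω)) := by
    unfold cExp
    congr 1
    apply setIntegral_congr_fun hAm
    intro ω hω
    rw [hY1 ω, if_neg (by simp [hAdef] at hω; simp [hω.1])]
  -- split the difference
  have hsplit : cExp P A (fun ω => μ11 (U₁ ω) - μ10 (U₁ ω))
      = cExp P A (fun ω => μ11 (U₁ ω)) - cExp P A (fun ω => μ10 (U₁ ω)) := by
    unfold cExp
    rw [integral_sub hI2.restrict hI3.restrict, sub_div]
  rw [hsplit, hpt, hswap, hY1A]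
end

section
/- Suppose Assumptions TI and CONT hold, but instead of strict monotonicity assume only that μ₀₀ and μ₁₀ are nondecreasing on ℝ (weak monotonicity, allowing discrete outcomes). With the conventions inf ∅ := +∞ and F_{X|A}(+∞) := 1, the following upper bound holds for every y ∈ ℝ: F_{Y₁(0)|G=1,R=1}(y) ≤ F_{Y₀|G=1,R=1}(F_{Y₀|G=0,R=1}^{-1}(F_{Y₁|G=0,R=1}(y))). (Upper-bound half of Remark 2 for the counterfactual untreated outcome of treatment respondents.) -/
open MeasureTheory ProbabilityTheory

/-- Generalized inverse valued in `EReal`, with the convention `inf ∅ = +∞`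
(and `inf S = -∞` when `S` is nonempty but unbounded below). -/
noncomputable def ginvE (F : ℝ → ℝ) (q : ℝ) : EReal :=
  sInf {z : EReal | ∃ x : ℝ, z = (x : EReal) ∧ q ≤ F x}

/-- Conditional CDF extended to `EReal` arguments, with the conventions
`F_{X|A}(+∞) = 1` and `F_{X|A}(-∞) = 0`. -/
noncomputable def cCDFE {Ω : Type*} [MeasurableSpace Ω] (P : Measure Ω) (A : Set Ω)
    (X : Ω → ℝ) (y : EReal) : ℝ :=
  if y = ⊤ then 1 else if y = ⊥ then 0 else cCDF P A X y.toReal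

/-!
Write `ν_g` for the law of `U₁` given `{G = g, R = 1}`; by TI it is also the law of `U₀` there,
so every CDF in the inequality is `ν_g` of a lower set `μ⁻¹' (-∞, x]`. Since `ν_0` has a strictly
increasing CDF, `ν_0 T ≤ ν_0 S` for lower sets `T`, `S` forces `T \ S` to be at most a point, which
`ν_1` does not charge (its CDF is continuous); so `ν_1 T ≤ ν_1 S`. Take `T = μ₁₀⁻¹' (-∞, y]` and
`S = μ₀₀⁻¹' (-∞, x]` with `x = F⁻¹(q)`: right-continuity of `F` gives `q ≤ F x` (the Galois
connection `F⁻¹ q ≤ x ↔ q ≤ F x`). If `F⁻¹ q = -∞`, the bound holds for every `x` and the CDF of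
`μ₀₀` under `ν_1` tends to `0`; if it is `+∞`, the right-hand side is `1`.
-/

open Set Filter

lemma nullSingletonClass_of_continuous_measureReal_Iic {ν : Measure ℝ} [IsProbabilityMeasure ν]
    (h : Continuous fun t => ν.real (Iic t)) : NullSingletonClass ν where
  measure_singleton x := by
    have hcdf : Continuous (cdf ν) := by simpa only [← cdf_eq_real] using h
    rw [← measure_cdf (μ := ν), StieltjesFunction.measure_singleton,
      hcdf.continuousWithinAt.leftLim_eq, sub_self, ENNReal.ofReal_zero]

lemma cdf_map_apply {ν : Measure ℝ} [IsProbabilityMeasure ν] {f : ℝ → ℝ} (hf : Measurable f)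
    (x : ℝ) : cdf (ν.map f) x = ν.real (f ⁻¹' Iic x) := by
  have := Measure.isProbabilityMeasure_map (μ := ν) hf.aemeasurable
  rw [cdf_eq_real, map_measureReal_apply hf measurableSet_Iic]

lemma ginvE_le_coe_iff (F : StieltjesFunction ℝ) {q x : ℝ} : ginvE F q ≤ x ↔ q ≤ F x := by
  refine ⟨fun h => ?_, fun h => sInf_le ⟨x, rfl, h⟩⟩
  have hright : ∀ x' > x, q ≤ F x' := by
    intro x' hx'
    obtain ⟨_, ⟨w, rfl, hw⟩, hwx'⟩ := sInf_lt_iff.1 (h.trans_lt (EReal.coe_lt_coe_iff.2 hx'))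
    exact hw.trans (F.mono (EReal.coe_lt_coe_iff.1 hwx').le)
  exact ge_of_tendsto
    ((F.right_continuous x).tendsto.mono_left (nhdsWithin_mono _ Ioi_subset_Ici_self))
    (eventually_nhdsWithin_of_forall hright)

section LinearOrder

variable {α : Type*} [LinearOrder α] [MeasurableSpace α] {ν₀ ν₁ : Measure α} [IsFiniteMeasure ν₀]
  {S T : Set α}

lemma diff_subsingleton_of_measureReal_le (h₀ : StrictMono fun t => ν₀.real (Iic t))
    (hS : IsLowerSet S) (hT : IsLowerSet T) (h : ν₀.real T ≤ ν₀.real S) : (T \ S).Subsingleton := by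
  have hle : ∀ a ∈ T \ S, ∀ b ∈ T \ S, b ≤ a := by
    intro a ha b hb
    by_contra! hab
    have hSa : S ⊆ Iic a := fun s hs => le_of_not_gt fun has => ha.2 (hS has.le hs)
    have hbT : Iic b ⊆ T := fun u hu => hT hu hb.1
    exact h.not_gt <| calc
      ν₀.real S ≤ ν₀.real (Iic a) := measureReal_mono hSa
      _ < ν₀.real (Iic b) := h₀ hab
      _ ≤ ν₀.real T := measureReal_mono hbT
  exact fun a ha b hb => le_antisymm (hle b hb a ha) (hle a ha b hb)

lemma measureReal_le_of_isLowerSet_of_measureReal_le [IsFiniteMeasure ν₁] [NullSingletonClass ν₁]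
    (h₀ : StrictMono fun t => ν₀.real (Iic t))
    (hS : IsLowerSet S) (hT : IsLowerSet T) (h : ν₀.real T ≤ ν₀.real S) :
    ν₁.real T ≤ ν₁.real S :=
  ENNReal.toReal_mono (measure_ne_top _ _) <| measure_mono_ae <|
    ae_le_set.2 ((diff_subsingleton_of_measureReal_le h₀ hS hT h).measure_zero ν₁)

end LinearOrder

section Real

variable {ν₀ ν₁ : Measure ℝ} [IsProbabilityMeasure ν₀] [IsProbabilityMeasure ν₁]
  [NullSingletonClass ν₁] {f : ℝ → ℝ} {T : Set ℝ}

lemma measureReal_le_of_ginvE_le (h₀ : StrictMono fun t => ν₀.real (Iic t)) (hf : Monotone f)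
    (hT : IsLowerSet T) {x : ℝ}
    (hx : ginvE (fun x => ν₀.real (f ⁻¹' Iic x)) (ν₀.real T) ≤ x) :
    ν₁.real T ≤ ν₁.real (f ⁻¹' Iic x) := by
  have hcdf : (fun x => ν₀.real (f ⁻¹' Iic x)) = cdf (ν₀.map f) :=
    funext fun x => (cdf_map_apply hf.measurable x).symm
  rw [hcdf, ginvE_le_coe_iff, cdf_map_apply hf.measurable] at hx
  exact measureReal_le_of_isLowerSet_of_measureReal_le h₀ (isLowerSet_Iic x |>.preimage hf) hT hx

lemma measureReal_eq_zero_of_ginvE_eq_bot (h₀ : StrictMono fun t => ν₀.real (Iic t))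
    (hf : Monotone f) (hT : IsLowerSet T)
    (hbot : ginvE (fun x => ν₀.real (f ⁻¹' Iic x)) (ν₀.real T) = ⊥) : ν₁.real T = 0 := by
  have hle : ∀ x, ν₁.real T ≤ cdf (ν₁.map f) x := fun x => by
    rw [cdf_map_apply hf.measurable]
    exact measureReal_le_of_ginvE_le h₀ hf hT (hbot ▸ bot_le)
  exact le_antisymm (ge_of_tendsto' (tendsto_cdf_atBot _) hle) measureReal_nonneg

end Real

lemma cCDF_eq_measureReal_map {Ω : Type*} [MeasurableSpace Ω] (P : Measure Ω) {A : Set Ω}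
    (hA : MeasurableSet A) {U X : Ω → ℝ} {f : ℝ → ℝ} (hU : Measurable U) (hf : Measurable f)
    (hX : ∀ ω ∈ A, X ω = f (U ω)) (y : ℝ) :
    cCDF P A X y = ((P[|A]).map U).real (f ⁻¹' Iic y) := by
  have hset : A ∩ {ω | X ω ≤ y} = A ∩ U ⁻¹' (f ⁻¹' Iic y) :=
    Set.ext fun ω => and_congr_right fun hω => by simp [hX ω hω]
  rw [map_measureReal_apply hU (hf measurableSet_Iic), cCDF, measureReal_def, cond_apply hA,
    cond_apply hA, hset]

/-- **Remark 2 (upper bound, counterfactual untreated outcome of treatment respondents)**: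
under Assumptions TI and CONT, with `μ₀₀` and `μ₁₀` only nondecreasing (weak monotonicity,
allowing discrete outcomes), for every `y ∈ ℝ`,
`F_{Y₁(0)|G=1,R=1}(y) ≤ F_{Y₀|G=1,R=1}(F_{Y₀|G=0,R=1}⁻¹(F_{Y₁|G=0,R=1}(y)))`,
with the conventions `inf ∅ = +∞` and `F(+∞) = 1`. -/
theorem cic_remark2_upper_untreated {Ω : Type*} [MeasurableSpace Ω]
    (P : Measure Ω) [IsProbabilityMeasure P]
    (U₀ U₁ : Ω → ℝ) (G R : Ω → Bool)
    (hU₀ : Measurable U₀) (hU₁ : Measurable U₁)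
    (hG : Measurable G) (hR : Measurable R)
    (μ00 μ10 μ11 : ℝ → ℝ)
    -- observed outcomes
    (Y0 Y1 : Ω → ℝ)
    (hY0 : ∀ ω, Y0 ω = μ00 (U₀ ω))
    (hY1 : ∀ ω, Y1 ω = if G ω = true then μ11 (U₁ ω) else μ10 (U₁ ω))
    -- Assumption TI (time invariance)
    (hTI : ∀ g r : Bool, 0 < P {ω | G ω = g ∧ R ω = r} →
      (P[|{ω | G ω = g ∧ R ω = r}]).map U₀ = (P[|{ω | G ω = g ∧ R ω = r}]).map U₁)
    -- Assumption CONT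
    (hCONT : ∀ g : Bool, 0 < P {ω | G ω = g ∧ R ω = true} ∧
      Continuous (cCDF P {ω | G ω = g ∧ R ω = true} U₁) ∧
      StrictMono (cCDF P {ω | G ω = g ∧ R ω = true} U₁))
    -- weak monotonicity of μ₀₀ and μ₁₀
    (hμ00 : Monotone μ00) (hμ10 : Monotone μ10)
    (y : ℝ) :
    cCDF P {ω | G ω = true ∧ R ω = true} (fun ω => μ10 (U₁ ω)) y
      ≤ cCDFE P {ω | G ω = true ∧ R ω = true} Y0
          (ginvE (cCDF P {ω | G ω = false ∧ R ω = true} Y0)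
            (cCDF P {ω | G ω = false ∧ R ω = true} Y1 y)) := by
  have hA g : MeasurableSet {ω | G ω = g ∧ R ω = true} :=
    (hG (measurableSet_singleton g)).inter (hR (measurableSet_singleton true))
  have _ g : IsProbabilityMeasure (P[|{ω | G ω = g ∧ R ω = true}]) :=
    cond_isProbabilityMeasure (hCONT g).1.ne'
  have _ g : IsProbabilityMeasure ((P[|{ω | G ω = g ∧ R ω = true}]).map U₁) :=
    Measure.isProbabilityMeasure_map hU₁.aemeasurable
  have hcdfU₁ g : cCDF P {ω | G ω = g ∧ R ω = true} U₁
      = fun t => ((P[|{ω | G ω = g ∧ R ω = true}]).map U₁).real (Iic t) :=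
    funext (cCDF_eq_measureReal_map P (hA g) hU₁ measurable_id fun _ _ => rfl)
  have hcdfY0 g : cCDF P {ω | G ω = g ∧ R ω = true} Y0
      = fun x => ((P[|{ω | G ω = g ∧ R ω = true}]).map U₁).real (μ00 ⁻¹' Iic x) := by
    rw [← hTI g true (hCONT g).1]
    exact funext (cCDF_eq_measureReal_map P (hA g) hU₀ hμ00.measurable fun ω _ => hY0 ω)
  have _ := nullSingletonClass_of_continuous_measureReal_Iic (hcdfU₁ true ▸ (hCONT true).2.1)
  have h₀ := hcdfU₁ false ▸ (hCONT false).2.2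
  have hT : IsLowerSet (μ10 ⁻¹' Iic y) := (isLowerSet_Iic y).preimage hμ10
  rw [cCDF_eq_measureReal_map P (hA true) hU₁ hμ10.measurable (fun _ _ => rfl),
    cCDF_eq_measureReal_map P (hA false) hU₁ hμ10.measurable (fun ω hω => by simp [hY1 ω, hω.1]),
    cCDFE, hcdfY0, hcdfY0]
  split_ifs with htop hbot
  · exact measureReal_le_one
  · exact (measureReal_eq_zero_of_ginvE_eq_bot h₀ hμ00 hT hbot).le
  · exact measureReal_le_of_ginvE_le h₀ hμ00 hT (EReal.coe_toReal htop hbot).ge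
end

section
/- Suppose Assumptions TI, CONT, M0 and M1 hold, P(G=1, R=0) > 0, and μ₁₁(U₀) and μ₁₁(U₁) are P-integrable. Then the mean treated outcome of treatment attritors is identified: E[Y₁(1) | G=1, R=0] = E[F_{Y₁|G=1,R=1}^{-1}(F_{Y₀|G=1,R=1}(Y₀)) | G=1, R=0]. (Key step in the proof of Proposition 2.) -/
open MeasureTheory ProbabilityTheory

/-- **Key step in Proposition 2 (treatment attritors)**: under Assumptions TI, CONT, M0 and
M1, with `P(G=1, R=0) > 0` and integrability of `μ₁₁(U₀)` and `μ₁₁(U₁)`, the mean treated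
outcome of treatment attritors is identified:
`E[Y₁(1) | G=1, R=0] = E[F_{Y₁|G=1,R=1}⁻¹(F_{Y₀|G=1,R=1}(Y₀)) | G=1, R=0]`. -/
theorem cic_prop2_treatment_attritors {Ω : Type*} [MeasurableSpace Ω]
    (P : Measure Ω) [IsProbabilityMeasure P]
    (U₀ U₁ : Ω → ℝ) (G R : Ω → Bool)
    (hU₀ : Measurable U₀) (hU₁ : Measurable U₁)
    (hG : Measurable G) (hR : Measurable R)
    (μ00 μ10 μ11 : ℝ → ℝ)
    -- observed outcomes
    (Y0 Y1 : Ω → ℝ)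
    (hY0 : ∀ ω, Y0 ω = μ00 (U₀ ω))
    (hY1 : ∀ ω, Y1 ω = if G ω = true then μ11 (U₁ ω) else μ10 (U₁ ω))
    -- Assumption TI (time invariance)
    (hTI : ∀ g r : Bool, 0 < P {ω | G ω = g ∧ R ω = r} →
      (P[|{ω | G ω = g ∧ R ω = r}]).map U₀ = (P[|{ω | G ω = g ∧ R ω = r}]).map U₁)
    -- Assumption CONT
    (hCONT : ∀ g : Bool, 0 < P {ω | G ω = g ∧ R ω = true} ∧
      Continuous (cCDF P {ω | G ω = g ∧ R ω = true} U₁) ∧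
      StrictMono (cCDF P {ω | G ω = g ∧ R ω = true} U₁))
    -- Assumption M0
    (hμ00c : Continuous μ00) (hμ00 : StrictMono μ00)
    (hμ10c : Continuous μ10) (hμ10 : StrictMono μ10)
    -- Assumption M1
    (hμ11c : Continuous μ11) (hμ11 : StrictMono μ11)
    -- positive probability of treatment attritors
    (hpos : 0 < P {ω | G ω = true ∧ R ω = false})
    -- integrability
    (hI1 : Integrable (fun ω => μ11 (U₀ ω)) P)
    (hI2 : Integrable (fun ω => μ11 (U₁ ω)) P) :
    cExp P {ω | G ω = true ∧ R ω = false} (fun ω => μ11 (U₁ ω))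
      = cExp P {ω | G ω = true ∧ R ω = false}
          (fun ω => ginv (cCDF P {ω | G ω = true ∧ R ω = true} Y1)
            (cCDF P {ω | G ω = true ∧ R ω = true} Y0 (Y0 ω))) := by
  set B : Set Ω := {ω | G ω = true ∧ R ω = true} with hBdef
  set A : Set Ω := {ω | G ω = true ∧ R ω = false} with hAdef
  have hBmeas : MeasurableSet B :=
    (hG (measurableSet_singleton true)).inter (hR (measurableSet_singleton true))
  have hAmeas : MeasurableSet A :=
    (hG (measurableSet_singleton true)).inter (hR (measurableSet_singleton false))
  obtain ⟨hBpos, hFc, hFm⟩ := hCONT true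
  set F : ℝ → ℝ := cCDF P B U₁ with hFdef
  have hTIB := hTI true true hBpos
  have hTIA := hTI true false hpos
  -- Claim 1: cCDF P B Y0 (μ00 u) = F u
  have claim1 : ∀ u : ℝ, cCDF P B Y0 (μ00 u) = F u := by
    intro u
    have hset : {ω | Y0 ω ≤ μ00 u} = U₀ ⁻¹' Set.Iic u := by
      ext ω; simp [hY0 ω, hμ00.le_iff_le, Set.mem_Iic]
    have hset' : {ω | U₁ ω ≤ u} = U₁ ⁻¹' Set.Iic u := rfl
    rw [cCDF, hset, hFdef, cCDF, hset',
      ← Measure.map_apply hU₀ measurableSet_Iic, hTIB,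
      Measure.map_apply hU₁ measurableSet_Iic]
  -- Claim 2/3: cCDF P B Y1 (μ11 v) = F v
  have claim2 : ∀ y : ℝ, cCDF P B Y1 y = ((P[|B]) {ω | μ11 (U₁ ω) ≤ y}).toReal := by
    intro y
    have hseteq : B ∩ {ω | Y1 ω ≤ y} = B ∩ {ω | μ11 (U₁ ω) ≤ y} := by
      ext ω
      simp only [Set.mem_inter_iff, Set.mem_setOf_eq, hBdef]
      constructor
      · rintro ⟨⟨hg, hr⟩, hy⟩
        exact ⟨⟨hg, hr⟩, by rw [hY1 ω, if_pos hg] at hy; exact hy⟩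
      · rintro ⟨⟨hg, hr⟩, hy⟩
        exact ⟨⟨hg, hr⟩, by rw [hY1 ω, if_pos hg]; exact hy⟩
    rw [cCDF, cond_apply hBmeas, hseteq, ← cond_apply hBmeas]
  have claim3 : ∀ v : ℝ, cCDF P B Y1 (μ11 v) = F v := by
    intro v
    rw [claim2, hFdef, cCDF]
    congr 2
    ext ω
    simp [hμ11.le_iff_le]
  -- monotonicity of cCDF P B Y1
  have hPB : IsProbabilityMeasure (P[|B]) :=
    cond_isProbabilityMeasure hBpos.ne'
  have hmono : Monotone (cCDF P B Y1) := by
    intro y z hyz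
    rw [cCDF, cCDF]
    exact ENNReal.toReal_mono (measure_ne_top _ _)
      (measure_mono (fun ω h => le_trans h hyz))
  -- Claim 5: ginv (cCDF P B Y1) (F u) = μ11 u
  have claim5 : ∀ u : ℝ, ginv (cCDF P B Y1) (F u) = μ11 u := by
    intro u
    have hmem : μ11 u ∈ {y : ℝ | F u ≤ cCDF P B Y1 y} := by
      simp [claim3 u]
    have hlb : ∀ y ∈ {y : ℝ | F u ≤ cCDF P B Y1 y}, μ11 u ≤ y := by
      intro y hy
      by_contra hlt
      push_neg at hlt
      set z : ℝ := max y (μ11 (u - 1)) with hz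
      have hz1 : μ11 (u - 1) ≤ z := le_max_right _ _
      have hz2 : z < μ11 u := max_lt hlt (hμ11 (by linarith))
      obtain ⟨u', hu'mem, hu'⟩ := intermediate_value_Icc (by linarith : u - 1 ≤ u)
        (hμ11c.continuousOn) ⟨hz1, hz2.le⟩
      have hu'lt : u' < u := by
        rcases lt_or_eq_of_le hu'mem.2 with h | h
        · exact h
        · exfalso; rw [h] at hu'; exact absurd hu' hz2.ne'
      have h1 : cCDF P B Y1 y ≤ cCDF P B Y1 z := hmono (le_max_left _ _)
      have h2 : cCDF P B Y1 z = F u' := by rw [← hu']; exact claim3 u'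
      have h3 : F u' < F u := hFm hu'lt
      have := hy.trans (h1.trans_eq h2)
      linarith
    rw [ginv]
    exact le_antisymm (csInf_le ⟨μ11 u, hlb⟩ hmem) (le_csInf ⟨μ11 u, hmem⟩ hlb)
  -- pointwise identity
  have hpoint : ∀ ω : Ω, ginv (cCDF P B Y1) (cCDF P B Y0 (Y0 ω)) = μ11 (U₀ ω) := by
    intro ω
    rw [hY0 ω, claim1, claim5]
  have hfun : (fun ω => ginv (cCDF P B Y1) (cCDF P B Y0 (Y0 ω)))
      = fun ω => μ11 (U₀ ω) := funext hpoint
  -- now reduce to equality of integrals over A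
  rw [hfun, cExp, cExp]
  congr 1
  -- ∫_A μ11 (U₁ ω) ∂P = ∫_A μ11 (U₀ ω) ∂P via TI on A
  have key : ∫ ω, μ11 (U₁ ω) ∂(P[|A]) = ∫ ω, μ11 (U₀ ω) ∂(P[|A]) := by
    rw [← integral_map hU₁.aemeasurable hμ11c.measurable.aestronglyMeasurable,
      ← hTIA,
      integral_map hU₀.aemeasurable hμ11c.measurable.aestronglyMeasurable]
  have expand : ∀ f : Ω → ℝ, ∫ ω, f ω ∂(P[|A]) = ((P A)⁻¹).toReal • ∫ ω in A, f ω ∂P := by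
    intro f
    rw [ProbabilityTheory.cond, integral_smul_measure]
  have hPA0 : (P A).toReal ≠ 0 := by
    have := hpos
    exact (ENNReal.toReal_pos this.ne' (measure_ne_top _ _)).ne'
  have hinv : ((P A)⁻¹).toReal ≠ 0 := by
    rw [ENNReal.toReal_inv]
    exact inv_ne_zero hPA0
  rw [expand, expand] at key
  exact smul_right_injective ℝ hinv key
end

section
/- Suppose Assumptions TI, CONT, M0 and M1 hold, P(G=1, R=0) > 0, and μ₁₀(U₀), μ₁₀(U₁), μ₁₁(U₀), μ₁₁(U₁) are all P-integrable. Then the average treatment effect on the treated attritors is identified: E[Y₁(1) − Y₁(0) | G=1, R=0] = E[F_{Y₁|G=1,R=1}^{-1}(F_{Y₀|G=1,R=1}(Y₀)) | G=1, R=0] − E[F_{Y₁|G=0,R=1}^{-1}(F_{Y₀|G=0,R=1}(Y₀)) | G=1, R=0]. (ATT-A component of Proposition 3.) -/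
open MeasureTheory ProbabilityTheory

section Aux

variable {Ω : Type*} [MeasurableSpace Ω]

/-- `cExp` equals the integral w.r.t. the conditional measure. -/
lemma cExp_eq_integral (P : Measure Ω) (A : Set Ω) (X : Ω → ℝ) :
    cExp P A X = ∫ ω, X ω ∂(P[|A]) := by
  rw [ProbabilityTheory.cond, integral_smul_measure]
  simp [cExp, ENNReal.toReal_inv, div_eq_inv_mul, smul_eq_mul]

/-- The conditional CDF of `Y0 = μ00 ∘ U₀` at `μ00 u0` equals the conditional CDF of `U₁`
at `u0`, using time invariance. -/
lemma cCDF_Y0_eq (P : Measure Ω) (A : Set Ω)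
    (U₀ U₁ : Ω → ℝ) (hU₀ : Measurable U₀) (hU₁ : Measurable U₁)
    (hTI : (P[|A]).map U₀ = (P[|A]).map U₁)
    (μ00 : ℝ → ℝ) (hμ00 : StrictMono μ00)
    (Y0 : Ω → ℝ) (hY0 : ∀ ω, Y0 ω = μ00 (U₀ ω)) (u0 : ℝ) :
    cCDF P A Y0 (μ00 u0) = cCDF P A U₁ u0 := by
  unfold cCDF
  congr 1
  have h1 : {ω | Y0 ω ≤ μ00 u0} = U₀ ⁻¹' (Set.Iic u0) := by
    ext ω; simp [hY0, hμ00.le_iff_le, Set.mem_Iic]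
  have h2 : {ω | U₁ ω ≤ u0} = U₁ ⁻¹' (Set.Iic u0) := rfl
  rw [h1, h2, ← Measure.map_apply hU₀ measurableSet_Iic,
      ← Measure.map_apply hU₁ measurableSet_Iic, hTI]

/-- The key identification: the generalized inverse of the conditional CDF of
`Yf = μ ∘ U₁` (on `A`) recovers `μ` composed with the quantile of `U₁`'s conditional CDF. -/
lemma ginv_cCDF_s16 (P : Measure Ω) (A : Set Ω) (hA : MeasurableSet A)
    (U₁ : Ω → ℝ) (hFm : StrictMono (cCDF P A U₁))
    (μ : ℝ → ℝ) (hμc : Continuous μ) (hμm : StrictMono μ)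
    (Yf : Ω → ℝ) (hYf : ∀ ω ∈ A, Yf ω = μ (U₁ ω)) (u0 : ℝ) :
    ginv (cCDF P A Yf) (cCDF P A U₁ u0) = μ u0 := by
  have key : ∀ u, cCDF P A Yf (μ u) = cCDF P A U₁ u := by
    intro u
    unfold cCDF
    rw [cond_apply hA, cond_apply hA]
    have hset : A ∩ {ω | Yf ω ≤ μ u} = A ∩ {ω | U₁ ω ≤ u} := by
      ext ω
      simp only [Set.mem_inter_iff, Set.mem_setOf_eq]
      exact and_congr_right fun hω => by rw [hYf ω hω, hμm.le_iff_le]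
    rw [hset]
  have hq : 0 < cCDF P A U₁ u0 :=
    lt_of_le_of_lt ENNReal.toReal_nonneg (hFm (sub_one_lt u0))
  have hzero : ∀ y, (∀ v, y < μ v) → cCDF P A Yf y = 0 := by
    intro y hy
    unfold cCDF
    rw [cond_apply hA]
    have hempty : A ∩ {ω | Yf ω ≤ y} = ∅ := by
      ext ω
      simp only [Set.mem_inter_iff, Set.mem_setOf_eq, Set.mem_empty_iff_false, iff_false,
        not_and]
      intro hω hle
      rw [hYf ω hω] at hle
      exact absurd hle (not_le.mpr (hy _))
    rw [hempty, measure_empty, mul_zero, ENNReal.toReal_zero]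
  have hleast : IsLeast {y : ℝ | cCDF P A U₁ u0 ≤ cCDF P A Yf y} (μ u0) := by
    constructor
    · exact (key u0).ge
    · intro y hy
      simp only [Set.mem_setOf_eq] at hy
      by_contra hlt
      push_neg at hlt
      rcases em (∃ v, μ v ≤ y) with ⟨v, hv⟩ | hnv
      · have hvu : v < u0 := hμm.lt_iff_lt.mp (lt_of_le_of_lt hv hlt)
        obtain ⟨w, hw, hwy⟩ :=
          intermediate_value_Icc hvu.le hμc.continuousOn ⟨hv, hlt.le⟩
        have hwu : w < u0 := hμm.lt_iff_lt.mp (by rw [hwy]; exact hlt)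
        rw [← hwy, key w] at hy
        exact absurd hy (not_le.mpr (hFm hwu))
      · push_neg at hnv
        rw [hzero y hnv] at hy
        exact absurd hy (not_le.mpr hq)
  exact hleast.csInf_eq

end Aux

/-- **ATT-A component of Proposition 3**: under Assumptions TI, CONT, M0 and M1, with
`P(G=1, R=0) > 0` and integrability of `μ₁₀(U₀)`, `μ₁₀(U₁)`, `μ₁₁(U₀)`, `μ₁₁(U₁)`, the
average treatment effect on the treated attritors is identified:
`E[Y₁(1) − Y₁(0) | G=1, R=0]
  = E[F_{Y₁|G=1,R=1}⁻¹(F_{Y₀|G=1,R=1}(Y₀)) | G=1,R=0]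
    − E[F_{Y₁|G=0,R=1}⁻¹(F_{Y₀|G=0,R=1}(Y₀)) | G=1,R=0]`. -/
theorem cic_prop3_ATTA {Ω : Type*} [MeasurableSpace Ω]
    (P : Measure Ω) [IsProbabilityMeasure P]
    (U₀ U₁ : Ω → ℝ) (G R : Ω → Bool)
    (hU₀ : Measurable U₀) (hU₁ : Measurable U₁)
    (hG : Measurable G) (hR : Measurable R)
    (μ00 μ10 μ11 : ℝ → ℝ)
    -- observed outcomes
    (Y0 Y1 : Ω → ℝ)
    (hY0 : ∀ ω, Y0 ω = μ00 (U₀ ω))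
    (hY1 : ∀ ω, Y1 ω = if G ω = true then μ11 (U₁ ω) else μ10 (U₁ ω))
    -- Assumption TI (time invariance)
    (hTI : ∀ g r : Bool, 0 < P {ω | G ω = g ∧ R ω = r} →
      (P[|{ω | G ω = g ∧ R ω = r}]).map U₀ = (P[|{ω | G ω = g ∧ R ω = r}]).map U₁)
    -- Assumption CONT
    (hCONT : ∀ g : Bool, 0 < P {ω | G ω = g ∧ R ω = true} ∧
      Continuous (cCDF P {ω | G ω = g ∧ R ω = true} U₁) ∧
      StrictMono (cCDF P {ω | G ω = g ∧ R ω = true} U₁))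
    -- Assumption M0
    (hμ00c : Continuous μ00) (hμ00 : StrictMono μ00)
    (hμ10c : Continuous μ10) (hμ10 : StrictMono μ10)
    -- Assumption M1
    (hμ11c : Continuous μ11) (hμ11 : StrictMono μ11)
    -- positive probability of treatment attritors
    (hpos : 0 < P {ω | G ω = true ∧ R ω = false})
    -- integrability
    (hI1 : Integrable (fun ω => μ10 (U₀ ω)) P)
    (hI2 : Integrable (fun ω => μ10 (U₁ ω)) P)
    (hI3 : Integrable (fun ω => μ11 (U₀ ω)) P)
    (hI4 : Integrable (fun ω => μ11 (U₁ ω)) P) :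
    cExp P {ω | G ω = true ∧ R ω = false} (fun ω => μ11 (U₁ ω) - μ10 (U₁ ω))
      = cExp P {ω | G ω = true ∧ R ω = false}
          (fun ω => ginv (cCDF P {ω | G ω = true ∧ R ω = true} Y1)
            (cCDF P {ω | G ω = true ∧ R ω = true} Y0 (Y0 ω)))
        - cExp P {ω | G ω = true ∧ R ω = false}
            (fun ω => ginv (cCDF P {ω | G ω = false ∧ R ω = true} Y1)
              (cCDF P {ω | G ω = false ∧ R ω = true} Y0 (Y0 ω))) := by
  have hAmeas : ∀ g r : Bool, MeasurableSet {ω | G ω = g ∧ R ω = r} := by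
    intro g r
    have : {ω | G ω = g ∧ R ω = r} = G ⁻¹' {g} ∩ R ⁻¹' {r} := by
      ext ω; simp
    rw [this]
    exact (hG (MeasurableSet.singleton g)).inter (hR (MeasurableSet.singleton r))
  -- Rewrite the right-hand-side integrands pointwise.
  have hR1 : (fun ω => ginv (cCDF P {ω | G ω = true ∧ R ω = true} Y1)
      (cCDF P {ω | G ω = true ∧ R ω = true} Y0 (Y0 ω))) = fun ω => μ11 (U₀ ω) := by
    funext ω
    rw [hY0 ω, cCDF_Y0_eq P _ U₀ U₁ hU₀ hU₁ (hTI true true (hCONT true).1) μ00 hμ00 Y0 hY0]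
    exact ginv_cCDF_s16 P _ (hAmeas true true) U₁ (hCONT true).2.2 μ11 hμ11c hμ11 Y1
      (fun ω hω => by rw [hY1 ω, if_pos hω.1]) (U₀ ω)
  have hR2 : (fun ω => ginv (cCDF P {ω | G ω = false ∧ R ω = true} Y1)
      (cCDF P {ω | G ω = false ∧ R ω = true} Y0 (Y0 ω))) = fun ω => μ10 (U₀ ω) := by
    funext ω
    rw [hY0 ω, cCDF_Y0_eq P _ U₀ U₁ hU₀ hU₁ (hTI false true (hCONT false).1) μ00 hμ00 Y0 hY0]
    refine ginv_cCDF_s16 P _ (hAmeas false true) U₁ (hCONT false).2.2 μ10 hμ10c hμ10 Y1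
      (fun ω hω => ?_) (U₀ ω)
    rw [hY1 ω, if_neg]
    simp [hω.1]
  rw [hR1, hR2]
  -- Split the left-hand side.
  have hsub : cExp P {ω | G ω = true ∧ R ω = false} (fun ω => μ11 (U₁ ω) - μ10 (U₁ ω))
      = cExp P {ω | G ω = true ∧ R ω = false} (fun ω => μ11 (U₁ ω))
        - cExp P {ω | G ω = true ∧ R ω = false} (fun ω => μ10 (U₁ ω)) := by
    unfold cExp
    rw [integral_sub hI4.integrableOn hI2.integrableOn, sub_div]
  -- Time invariance on the attritor group.
  have hTI10 := hTI true false hpos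
  have cExp_TI : ∀ (f : ℝ → ℝ), Continuous f →
      cExp P {ω | G ω = true ∧ R ω = false} (fun ω => f (U₁ ω))
        = cExp P {ω | G ω = true ∧ R ω = false} (fun ω => f (U₀ ω)) := by
    intro f hf
    rw [cExp_eq_integral, cExp_eq_integral,
      ← integral_map hU₁.aemeasurable hf.measurable.aestronglyMeasurable,
      ← integral_map hU₀.aemeasurable hf.measurable.aestronglyMeasurable, hTI10]
  rw [hsub, cExp_TI μ11 hμ11c, cExp_TI μ10 hμ10c]
end

section
/- Suppose Assumptions TI, CONT, M0 and M1 hold, P(G=g, R=r) > 0 for all (g,r) ∈ {0,1}², and μ₁₀(U₀), μ₁₀(U₁), μ₁₁(U₀), μ₁₁(U₁) are all P-integrable. Then, without any random assignment assumption, the average treatment effect for the study population is identified: E[Y₁(1) − Y₁(0)] = P(G=1, R=1)·(E[Y₁ | G=1,R=1] − E[F_{Y₁|G=0,R=1}^{-1}(F_{Y₀|G=0,R=1}(Y₀)) | G=1,R=1]) + P(G=1, R=0)·(E[F_{Y₁|G=1,R=1}^{-1}(F_{Y₀|G=1,R=1}(Y₀)) | G=1,R=0] − E[F_{Y₁|G=0,R=1}^{-1}(F_{Y₀|G=0,R=1}(Y₀))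 | G=1,R=0]) + P(G=0, R=1)·(E[F_{Y₁|G=1,R=1}^{-1}(F_{Y₀|G=1,R=1}(Y₀)) | G=0,R=1] − E[Y₁ | G=0,R=1]) + P(G=0, R=0)·(E[F_{Y₁|G=1,R=1}^{-1}(F_{Y₀|G=1,R=1}(Y₀)) | G=0,R=0] − E[F_{Y₁|G=0,R=1}^{-1}(F_{Y₀|G=0,R=1}(Y₀)) | G=0,R=0]). (Proposition 3: identification of the ATE without random assignment.) -/
open MeasureTheory ProbabilityTheory

section Aux

open Filter Topology

variable {Ω : Type*} [MeasurableSpace Ω] {P : Measure Ω} [IsProbabilityMeasure P]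

lemma cCDF_comp_eq {A : Set Ω} {X : Ω → ℝ} {μ : ℝ → ℝ} (hμ : StrictMono μ) (u : ℝ) :
    cCDF P A (fun ω => μ (X ω)) (μ u) = cCDF P A X u := by
  have hset : {ω | μ (X ω) ≤ μ u} = {ω | X ω ≤ u} := by
    ext ω; simp [hμ.le_iff_le]
  unfold cCDF
  rw [hset]

lemma ginv_cCDF_eq {A : Set Ω} (hA0 : P A ≠ 0)
    {X : Ω → ℝ} (hF : StrictMono (cCDF P A X))
    {μ : ℝ → ℝ} (hμc : Continuous μ) (hμ : StrictMono μ) (u : ℝ) :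
    ginv (cCDF P A (fun ω => μ (X ω))) (cCDF P A X u) = μ u := by
  have hmem : μ u ∈ {y : ℝ | cCDF P A X u ≤ cCDF P A (fun ω => μ (X ω)) y} := by
    simp only [Set.mem_setOf_eq, cCDF_comp_eq hμ u, le_refl]
  have hlb : ∀ y ∈ {y : ℝ | cCDF P A X u ≤ cCDF P A (fun ω => μ (X ω)) y}, μ u ≤ y := by
    intro y hy
    by_contra hlt
    push_neg at hlt
    obtain ⟨u', hyu', hu'u⟩ : ∃ u', y < μ u' ∧ u' < u := by
      have h1 : ∀ᶠ x in 𝓝[<] u, y < μ x :=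
        (((hμc.tendsto u).eventually_const_lt hlt)).filter_mono nhdsWithin_le_nhds
      exact (h1.and self_mem_nhdsWithin).exists
    have hsub : {ω | μ (X ω) ≤ y} ⊆ {ω | X ω ≤ u'} := fun ω hω =>
      le_of_lt (hμ.lt_iff_lt.mp (lt_of_le_of_lt hω hyu'))
    have h2 : cCDF P A (fun ω => μ (X ω)) y ≤ cCDF P A X u' := by
      haveI : IsProbabilityMeasure (P[|A]) := cond_isProbabilityMeasure hA0
      exact ENNReal.toReal_mono (measure_ne_top _ _) (measure_mono hsub)
    have h3 := hF hu'u
    have h4 : cCDF P A X u ≤ cCDF P A (fun ω => μ (X ω)) y := hy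
    linarith
  exact le_antisymm (csInf_le ⟨μ u, hlb⟩ hmem) (le_csInf ⟨μ u, hmem⟩ hlb)

end Aux

/-- **Proposition 3 (identification of the ATE without random assignment)**: under
Assumptions TI, CONT, M0 and M1, with `P(G=g, R=r) > 0` for all `(g,r) ∈ {0,1}²` and
integrability of `μ₁₀(U₀)`, `μ₁₀(U₁)`, `μ₁₁(U₀)`, `μ₁₁(U₁)`, the average treatment effect
for the study population is identified as the probability-weighted sum of ATT-R, ATT-A,
ATU-R and ATU-A, each expressed in terms of observables. -/
theorem cic_prop3_ATE_no_random_assignment {Ω : Type*} [MeasurableSpace Ω]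
    (P : Measure Ω) [IsProbabilityMeasure P]
    (U₀ U₁ : Ω → ℝ) (G R : Ω → Bool)
    (hU₀ : Measurable U₀) (hU₁ : Measurable U₁)
    (hG : Measurable G) (hR : Measurable R)
    (μ00 μ10 μ11 : ℝ → ℝ)
    -- observed outcomes
    (Y0 Y1 : Ω → ℝ)
    (hY0 : ∀ ω, Y0 ω = μ00 (U₀ ω))
    (hY1 : ∀ ω, Y1 ω = if G ω = true then μ11 (U₁ ω) else μ10 (U₁ ω))
    -- Assumption TI (time invariance)
    (hTI : ∀ g r : Bool, 0 < P {ω | G ω = g ∧ R ω = r} →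
      (P[|{ω | G ω = g ∧ R ω = r}]).map U₀ = (P[|{ω | G ω = g ∧ R ω = r}]).map U₁)
    -- Assumption CONT
    (hCONT : ∀ g : Bool, 0 < P {ω | G ω = g ∧ R ω = true} ∧
      Continuous (cCDF P {ω | G ω = g ∧ R ω = true} U₁) ∧
      StrictMono (cCDF P {ω | G ω = g ∧ R ω = true} U₁))
    -- Assumption M0
    (hμ00c : Continuous μ00) (hμ00 : StrictMono μ00)
    (hμ10c : Continuous μ10) (hμ10 : StrictMono μ10)
    -- Assumption M1
    (hμ11c : Continuous μ11) (hμ11 : StrictMono μ11)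
    -- all four treatment-response subpopulations have positive probability
    (hpos : ∀ g r : Bool, 0 < P {ω | G ω = g ∧ R ω = r})
    -- integrability
    (hI1 : Integrable (fun ω => μ10 (U₀ ω)) P)
    (hI2 : Integrable (fun ω => μ10 (U₁ ω)) P)
    (hI3 : Integrable (fun ω => μ11 (U₀ ω)) P)
    (hI4 : Integrable (fun ω => μ11 (U₁ ω)) P) :
    ∫ ω, (μ11 (U₁ ω) - μ10 (U₁ ω)) ∂P
      = (P {ω | G ω = true ∧ R ω = true}).toReal
          * (cExp P {ω | G ω = true ∧ R ω = true} Y1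
            - cExp P {ω | G ω = true ∧ R ω = true}
                (fun ω => ginv (cCDF P {ω | G ω = false ∧ R ω = true} Y1)
                  (cCDF P {ω | G ω = false ∧ R ω = true} Y0 (Y0 ω))))
        + (P {ω | G ω = true ∧ R ω = false}).toReal
          * (cExp P {ω | G ω = true ∧ R ω = false}
                (fun ω => ginv (cCDF P {ω | G ω = true ∧ R ω = true} Y1)
                  (cCDF P {ω | G ω = true ∧ R ω = true} Y0 (Y0 ω)))
            - cExp P {ω | G ω = true ∧ R ω = false}
                (fun ω => ginv (cCDF P {ω | G ω = false ∧ R ω = true} Y1)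
                  (cCDF P {ω | G ω = false ∧ R ω = true} Y0 (Y0 ω))))
        + (P {ω | G ω = false ∧ R ω = true}).toReal
          * (cExp P {ω | G ω = false ∧ R ω = true}
                (fun ω => ginv (cCDF P {ω | G ω = true ∧ R ω = true} Y1)
                  (cCDF P {ω | G ω = true ∧ R ω = true} Y0 (Y0 ω)))
            - cExp P {ω | G ω = false ∧ R ω = true} Y1)
        + (P {ω | G ω = false ∧ R ω = false}).toReal
          * (cExp P {ω | G ω = false ∧ R ω = false}
                (fun ω => ginv (cCDF P {ω | G ω = true ∧ R ω = true} Y1)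
                  (cCDF P {ω | G ω = true ∧ R ω = true} Y0 (Y0 ω)))
            - cExp P {ω | G ω = false ∧ R ω = false}
                (fun ω => ginv (cCDF P {ω | G ω = false ∧ R ω = true} Y1)
                  (cCDF P {ω | G ω = false ∧ R ω = true} Y0 (Y0 ω)))) := by
  classical
  have hAmeas : ∀ g r : Bool, MeasurableSet {ω | G ω = g ∧ R ω = r} := by
    intro g r
    have : {ω | G ω = g ∧ R ω = r} = G ⁻¹' {g} ∩ R ⁻¹' {r} := rfl
    rw [this]
    exact (hG (measurableSet_singleton g)).inter (hR (measurableSet_singleton r))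
  have hA0 : ∀ g r : Bool, P {ω | G ω = g ∧ R ω = r} ≠ 0 := fun g r => (hpos g r).ne'
  have htr : ∀ g r : Bool, (P {ω | G ω = g ∧ R ω = r}).toReal ≠ 0 := fun g r =>
    ENNReal.toReal_ne_zero.mpr ⟨hA0 g r, measure_ne_top _ _⟩
  -- key pointwise identification of the counterfactual map
  have hkey : ∀ (g : Bool) (ν : ℝ → ℝ), Continuous ν → StrictMono ν →
      (∀ ω, G ω = g → Y1 ω = ν (U₁ ω)) →
      ∀ ω, ginv (cCDF P {ω | G ω = g ∧ R ω = true} Y1)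
          (cCDF P {ω | G ω = g ∧ R ω = true} Y0 (Y0 ω)) = ν (U₀ ω) := by
    intro g ν hνc hν hYν ω
    have hA : MeasurableSet {ω | G ω = g ∧ R ω = true} := hAmeas g true
    have hA0' : P {ω | G ω = g ∧ R ω = true} ≠ 0 := hA0 g true
    have h1 : cCDF P {ω | G ω = g ∧ R ω = true} Y1
        = cCDF P {ω | G ω = g ∧ R ω = true} (fun ω => ν (U₁ ω)) := by
      funext y
      unfold cCDF
      rw [cond_apply hA, cond_apply hA]
      have hset : {ω | G ω = g ∧ R ω = true} ∩ {ω | Y1 ω ≤ y}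
          = {ω | G ω = g ∧ R ω = true} ∩ {ω | ν (U₁ ω) ≤ y} := by
        ext ω'
        simp only [Set.mem_inter_iff, Set.mem_setOf_eq]
        constructor
        · rintro ⟨⟨hg, hr⟩, h2⟩; exact ⟨⟨hg, hr⟩, by rwa [← hYν ω' hg]⟩
        · rintro ⟨⟨hg, hr⟩, h2⟩; exact ⟨⟨hg, hr⟩, by rwa [hYν ω' hg]⟩
      rw [hset]
    have h2 : cCDF P {ω | G ω = g ∧ R ω = true} Y0 (Y0 ω)
        = cCDF P {ω | G ω = g ∧ R ω = true} U₁ (U₀ ω) := by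
      have e0 : cCDF P {ω | G ω = g ∧ R ω = true} Y0
          = cCDF P {ω | G ω = g ∧ R ω = true} (fun ω => μ00 (U₀ ω)) := by
        funext y
        unfold cCDF
        have hset : {ω | Y0 ω ≤ y} = {ω | μ00 (U₀ ω) ≤ y} := by
          ext ω'; simp [hY0 ω']
        rw [hset]
      have e1 : cCDF P {ω | G ω = g ∧ R ω = true} U₀
          = cCDF P {ω | G ω = g ∧ R ω = true} U₁ := by
        funext u
        unfold cCDF
        have hTImap := hTI g true (hpos g true)
        have m0 := Measure.map_apply (μ := P[|{ω | G ω = g ∧ R ω = true}]) hU₀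
          (measurableSet_Iic (a := u))
        have m1 := Measure.map_apply (μ := P[|{ω | G ω = g ∧ R ω = true}]) hU₁
          (measurableSet_Iic (a := u))
        have : (P[|{ω | G ω = g ∧ R ω = true}]) {ω | U₀ ω ≤ u}
            = (P[|{ω | G ω = g ∧ R ω = true}]) {ω | U₁ ω ≤ u} := by
          have h0 : {ω | U₀ ω ≤ u} = U₀ ⁻¹' Set.Iic u := rfl
          have h1' : {ω | U₁ ω ≤ u} = U₁ ⁻¹' Set.Iic u := rfl
          rw [h0, h1', ← m0, ← m1, hTImap]
        rw [this]
      rw [e0, hY0 ω, cCDF_comp_eq hμ00, e1]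
    rw [h1, h2]
    exact ginv_cCDF_eq hA0' (hCONT g).2.2 hνc hν (U₀ ω)
  -- swap U₀ for U₁ inside conditional expectations (Assumption TI)
  have hswap : ∀ (g r : Bool) (f : ℝ → ℝ), Continuous f →
      ∫ ω in {ω | G ω = g ∧ R ω = r}, f (U₀ ω) ∂P
        = ∫ ω in {ω | G ω = g ∧ R ω = r}, f (U₁ ω) ∂P := by
    intro g r f hf
    have key : ∀ X : Ω → ℝ, Measurable X →
        ∫ ω in {ω | G ω = g ∧ R ω = r}, f (X ω) ∂P
          = (P {ω | G ω = g ∧ R ω = r}).toReal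
            * ∫ x, f x ∂((P[|{ω | G ω = g ∧ R ω = r}]).map X) := by
      intro X hX
      have hcond : ∫ x, f x ∂((P[|{ω | G ω = g ∧ R ω = r}]).map X)
          = (P {ω | G ω = g ∧ R ω = r})⁻¹.toReal
            * ∫ x, f x ∂((P.restrict {ω | G ω = g ∧ R ω = r}).map X) := by
        rw [show (P[|{ω | G ω = g ∧ R ω = r}]) = (P {ω | G ω = g ∧ R ω = r})⁻¹
              • P.restrict {ω | G ω = g ∧ R ω = r} from rfl,
            Measure.map_smul, integral_smul_measure, smul_eq_mul]
      rw [hcond, integral_map hX.aemeasurable hf.aestronglyMeasurable, ENNReal.toReal_inv,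
          ← mul_assoc, mul_inv_cancel₀ (htr g r), one_mul]
    rw [key U₀ hU₀, key U₁ hU₁, hTI g r (hpos g r)]
  -- decomposition of the full integral into the four subpopulations
  have hdecomp : ∀ f : Ω → ℝ, Integrable f P →
      ∫ ω, f ω ∂P = (∫ ω in {ω | G ω = true ∧ R ω = true}, f ω ∂P)
        + (∫ ω in {ω | G ω = true ∧ R ω = false}, f ω ∂P)
        + ((∫ ω in {ω | G ω = false ∧ R ω = true}, f ω ∂P)
        + (∫ ω in {ω | G ω = false ∧ R ω = false}, f ω ∂P)) := by
    intro f hf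
    have hg : MeasurableSet {ω | G ω = true} := hG (measurableSet_singleton true)
    have hsplitG : ∀ g : Bool, ∫ ω in {ω | G ω = g}, f ω ∂P
        = (∫ ω in {ω | G ω = g ∧ R ω = true}, f ω ∂P)
          + (∫ ω in {ω | G ω = g ∧ R ω = false}, f ω ∂P) := by
      intro g
      have hset : {ω | G ω = g}
          = {ω | G ω = g ∧ R ω = true} ∪ {ω | G ω = g ∧ R ω = false} := by
        ext ω; cases h : R ω <;> simp [h]
      have hdisj : Disjoint {ω | G ω = g ∧ R ω = true} {ω | G ω = g ∧ R ω = false} := by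
        rw [Set.disjoint_left]
        rintro ω ⟨_, h1⟩ ⟨_, h2⟩
        simp [h1] at h2
      rw [hset, setIntegral_union hdisj (hAmeas g false) hf.integrableOn hf.integrableOn]
    have hcompl : {ω | G ω = true}ᶜ = {ω | G ω = false} := by
      ext ω; simp [Bool.not_eq_true]
    rw [← integral_add_compl hg hf, hcompl, hsplitG true, hsplitG false]
  -- identify the counterfactual maps
  have k1 := hkey true μ11 hμ11c hμ11 (fun ω hg => by rw [hY1 ω, if_pos hg])
  have k0 := hkey false μ10 hμ10c hμ10
    (fun ω hg => by rw [hY1 ω, if_neg (by simp [hg])])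
  simp only [k1, k0, cExp]
  -- replace observed Y1 on the response subpopulations
  have e_tt : ∫ ω in {ω | G ω = true ∧ R ω = true}, Y1 ω ∂P
      = ∫ ω in {ω | G ω = true ∧ R ω = true}, μ11 (U₁ ω) ∂P :=
    setIntegral_congr_fun (hAmeas true true) (fun ω hω => by rw [hY1 ω, if_pos hω.1])
  have e_ft : ∫ ω in {ω | G ω = false ∧ R ω = true}, Y1 ω ∂P
      = ∫ ω in {ω | G ω = false ∧ R ω = true}, μ10 (U₁ ω) ∂P :=
    setIntegral_congr_fun (hAmeas false true)
      (fun ω hω => by rw [hY1 ω, if_neg (by simp [hω.1])])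
  rw [e_tt, e_ft, hswap true true μ10 hμ10c, hswap true false μ11 hμ11c,
      hswap true false μ10 hμ10c, hswap false true μ11 hμ11c,
      hswap false false μ11 hμ11c, hswap false false μ10 hμ10c]
  -- decompose the left-hand side
  have hInt : Integrable (fun ω => μ11 (U₁ ω) - μ10 (U₁ ω)) P := hI4.sub hI2
  rw [hdecomp _ hInt]
  have hsub : ∀ g r : Bool,
      ∫ ω in {ω | G ω = g ∧ R ω = r}, (μ11 (U₁ ω) - μ10 (U₁ ω)) ∂P
        = (∫ ω in {ω | G ω = g ∧ R ω = r}, μ11 (U₁ ω) ∂P)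
          - ∫ ω in {ω | G ω = g ∧ R ω = r}, μ10 (U₁ ω) ∂P := fun g r =>
    integral_sub hI4.integrableOn hI2.integrableOn
  rw [hsub true true, hsub true false, hsub false true, hsub false false]
  have hfin : ∀ (c a b : ℝ), c ≠ 0 → c * (a / c - b / c) = a - b := by
    intro c a b hc; field_simp
  rw [hfin _ _ _ (htr true true), hfin _ _ _ (htr true false),
      hfin _ _ _ (htr false true), hfin _ _ _ (htr false false)]
  ring
end

section
/- Let φ : ℝ × ℝ × {0,1} → {0,1} be measurable with φ(u₀, u₁, g) = φ(u₁, u₀, g) for all u₀, u₁ ∈ ℝ and g ∈ {0,1} (symmetry in the first two arguments), and set R := φ(U₀, U₁, G). Suppose that for g = 0,1: P(G=g) > 0, 0 < P(R=1 | G=g) < 1, and the conditional distribution of the pair (U₀, U₁) given the event {G=g} equals the conditional distribution of the pair (U₁, U₀) given {G=g} (exchangeability). Then for every (g,r) ∈ {0,1}², the conditional distribution of U₀ given the event {G=g, R=r} equals the conditional distribution of U₁ given {G=g, R=r}; that is, the time-invariance condition U₀ | G,R =ᵈ U₁ | G,R holds. (Proposition 4.) -/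
open MeasureTheory ProbabilityTheory

/-- **Proposition 4 (selection into response and time invariance)**: let the response be
generated by `R = φ(U₀, U₁, G)` with `φ` measurable and symmetric in its first two
arguments. If for `g = 0,1` we have `P(G=g) > 0`, `0 < P(R=1|G=g) < 1`, and the
conditional distribution of `(U₀, U₁)` given `{G=g}` is exchangeable (equals the
conditional distribution of `(U₁, U₀)` given `{G=g}`), then for every `(g,r) ∈ {0,1}²`
the conditional distribution of `U₀` given `{G=g, R=r}` equals the conditional
distribution of `U₁` given `{G=g, R=r}`; i.e. `U₀ | G,R =ᵈ U₁ | G,R`. -/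
theorem cic_prop4_selection_time_invariance {Ω : Type*} [MeasurableSpace Ω]
    (P : Measure Ω) [IsProbabilityMeasure P]
    (U₀ U₁ : Ω → ℝ) (G R : Ω → Bool)
    (hU₀ : Measurable U₀) (hU₁ : Measurable U₁)
    (hG : Measurable G)
    (φ : ℝ → ℝ → Bool → Bool)
    (hφmeas : Measurable fun p : ℝ × ℝ × Bool => φ p.1 p.2.1 p.2.2)
    -- symmetry of φ in its first two arguments
    (hφsym : ∀ (u₀ u₁ : ℝ) (g : Bool), φ u₀ u₁ g = φ u₁ u₀ g)
    -- response generated by the selection mechanism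
    (hRdef : ∀ ω, R ω = φ (U₀ ω) (U₁ ω) (G ω))
    -- each treatment group has positive probability
    (hGpos : ∀ g : Bool, 0 < P {ω | G ω = g})
    -- 0 < P(R=1|G=g) < 1 for g = 0,1
    (hresp : ∀ g : Bool, 0 < condProb P {ω | G ω = g} {ω | R ω = true} ∧
      condProb P {ω | G ω = g} {ω | R ω = true} < 1)
    -- exchangeability of (U₀, U₁) given G
    (hexch : ∀ g : Bool,
      (P[|{ω | G ω = g}]).map (fun ω => (U₀ ω, U₁ ω))
        = (P[|{ω | G ω = g}]).map (fun ω => (U₁ ω, U₀ ω))) :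
    ∀ g r : Bool,
      (P[|{ω | G ω = g ∧ R ω = r}]).map U₀ = (P[|{ω | G ω = g ∧ R ω = r}]).map U₁ := by
  intro g r
  set A : Set Ω := {ω | G ω = g} with hAdef
  have hA : MeasurableSet A := hG (measurableSet_singleton g)
  set f : ℝ × ℝ → Bool := fun p => φ p.1 p.2 g with hfdef
  have hf : Measurable f :=
    hφmeas.comp (measurable_fst.prodMk (measurable_snd.prodMk measurable_const))
  set T : Set (ℝ × ℝ) := f ⁻¹' {r} with hTdef
  have hT : MeasurableSet T := hf (measurableSet_singleton r)
  set pair : Ω → ℝ × ℝ := fun ω => (U₀ ω, U₁ ω) with hpairdef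
  have hpair : Measurable pair := hU₀.prodMk hU₁
  set rpair : Ω → ℝ × ℝ := fun ω => (U₁ ω, U₀ ω) with hrpairdef
  have hrpair : Measurable rpair := hU₁.prodMk hU₀
  have hC : {ω | G ω = g ∧ R ω = r} = A ∩ pair ⁻¹' T := by
    ext ω
    simp only [Set.mem_setOf_eq, Set.mem_inter_iff, Set.mem_preimage, hAdef, hTdef, hfdef,
      Set.mem_preimage, Set.mem_singleton_iff, hpairdef]
    constructor
    · rintro ⟨h1, h2⟩
      exact ⟨h1, by rw [← h2, hRdef ω, h1]⟩
    · rintro ⟨h1, h2⟩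
      exact ⟨h1, by rw [hRdef ω, h1, h2]⟩
  have hCm : MeasurableSet {ω | G ω = g ∧ R ω = r} := hC ▸ hA.inter (hpair hT)
  have hPA : P A ≠ 0 := (hGpos g).ne'
  have hPAfin : P A ≠ ⊤ := measure_ne_top P A
  -- key: for all measurable s, P (U₀ ⁻¹' s ∩ C) = P (U₁ ⁻¹' s ∩ C)
  have key : ∀ s : Set ℝ, MeasurableSet s →
      P (U₀ ⁻¹' s ∩ {ω | G ω = g ∧ R ω = r}) = P (U₁ ⁻¹' s ∩ {ω | G ω = g ∧ R ω = r}) := by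
    intro s hs
    have hE : MeasurableSet ((s ×ˢ (Set.univ : Set ℝ)) ∩ T) :=
      (hs.prod MeasurableSet.univ).inter hT
    have e0 : U₀ ⁻¹' s ∩ {ω | G ω = g ∧ R ω = r}
        = A ∩ pair ⁻¹' ((s ×ˢ Set.univ) ∩ T) := by
      rw [hC]
      ext ω
      simp only [Set.mem_inter_iff, Set.mem_preimage, Set.mem_prod, Set.mem_univ, and_true,
        hpairdef]
      tauto
    have e1 : U₁ ⁻¹' s ∩ {ω | G ω = g ∧ R ω = r}
        = A ∩ rpair ⁻¹' ((s ×ˢ Set.univ) ∩ T) := by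
      rw [hC]
      ext ω
      simp only [Set.mem_inter_iff, Set.mem_preimage, Set.mem_prod, Set.mem_univ, and_true,
        hpairdef, hrpairdef, hTdef, Set.mem_singleton_iff, hfdef]
      rw [hφsym (U₁ ω) (U₀ ω) g]
      tauto
    have hint : ∀ B : Set Ω, P (A ∩ B) = P A * (P[|A]) B := by
      intro B
      rw [ProbabilityTheory.cond_apply hA, ← mul_assoc, ENNReal.mul_inv_cancel hPA hPAfin,
        one_mul]
    rw [e0, e1, hint, hint,
      ← Measure.map_apply hpair hE, ← Measure.map_apply hrpair hE, hexch g]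
  -- conclude
  ext s hs
  rw [Measure.map_apply hU₀ hs, Measure.map_apply hU₁ hs,
    ProbabilityTheory.cond_apply hCm, ProbabilityTheory.cond_apply hCm,
    Set.inter_comm _ (U₀ ⁻¹' s), Set.inter_comm _ (U₁ ⁻¹' s), key s hs]
end
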